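/- arXiv:cs/0205050 — 5 statements merged into one kernel-verified Lean document; each statement's English description precedes it below -/
import Mathlib

section
/- Let V be a finite set with at least 2 elements, w a symmetric nonnegative weight function on V × V satisfying the triangle inequality and w(v,v) = 0, and T a spanning tree on V. Then there exists a spanning tree T' on V such that deg_{T'}(v) ≤ 1 + ⌈deg_T(v)/2⌉ for every v ∈ V and w(T') ≤ (3/2) · w(T). -/
open scoped Classical

/-- The degree of a vertex `v` in the graph `G`. -/
noncomputable def degreeOf {V : Type*} [Fintype V] (G : SimpleGraph V) (v : V) : ℕ :=
  Set.ncard {u | G.Adj v u}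

/-- The weight of the graph `G` with respect to the (symmetric) weight function `w`. -/
noncomputable def weightOf {V : Type*} [Fintype V] (G : SimpleGraph V) (w : V → V → ℝ) : ℝ :=
  (∑ u : V, ∑ v : V, if G.Adj u v then w u v else 0) / 2

section ParentMap

variable {V : Type*} [Fintype V]

/-- The graph determined by a parent map. -/
def pGraph (p : V → V) : SimpleGraph V where
  Adj u v := u ≠ v ∧ (p u = v ∨ p v = u)
  symm := ⟨fun u v h => ⟨h.1.symm, h.2.symm⟩⟩
  loopless := ⟨fun v h => h.1 rfl⟩

lemma pGraph_adj (p : V → V) (u v : V) :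
    (pGraph p).Adj u v ↔ u ≠ v ∧ (p u = v ∨ p v = u) := Iff.rfl

/-- rank of a vertex: number of parent steps to reach the root. -/
noncomputable def rho (p : V → V) (r : V) (v : V) : ℕ :=
  if h : ∃ n, p^[n] v = r then Nat.find h else 0

variable {p : V → V} {r : V}

lemma rho_root : rho p r r = 0 := by
  have h : ∃ n, p^[n] r = r := ⟨0, rfl⟩
  simp only [rho, dif_pos h]
  exact Nat.find_eq_zero h |>.2 rfl

lemma rho_succ (hwf : ∀ v, ∃ n, p^[n] v = r) {v : V} (hv : v ≠ r) :
    rho p r v = rho p r (p v) + 1 := by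
  have h1 : ∃ n, p^[n] v = r := hwf v
  have h2 : ∃ n, p^[n] (p v) = r := hwf (p v)
  simp only [rho, dif_pos h1, dif_pos h2]
  have hpos : 0 < Nat.find h1 := by
    rcases Nat.eq_zero_or_pos (Nat.find h1) with h | h
    · exfalso; apply hv; have := Nat.find_spec h1; rwa [h] at this
    · exact h
  obtain ⟨k, hk⟩ : ∃ k, Nat.find h1 = k + 1 := ⟨Nat.find h1 - 1, by omega⟩
  have hspec := Nat.find_spec h1
  rw [hk] at hspec
  rw [Function.iterate_succ_apply] at hspec
  have hle : Nat.find h2 ≤ k := Nat.find_min' h2 hspec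
  have hge : k ≤ Nat.find h2 := by
    by_contra hlt
    push_neg at hlt
    have : p^[Nat.find h2 + 1] v = r := by
      rw [Function.iterate_succ_apply]; exact Nat.find_spec h2
    have h3 := Nat.find_min' h1 this
    omega
  omega

lemma rho_par_lt (hwf : ∀ v, ∃ n, p^[n] v = r) {v : V} (hv : v ≠ r) :
    rho p r (p v) < rho p r v := by
  rw [rho_succ hwf hv]; omega

lemma par_ne_self (hwf : ∀ v, ∃ n, p^[n] v = r) {v : V} (hv : v ≠ r) : p v ≠ v := by
  intro h
  have := rho_succ hwf hv
  rw [h] at this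
  omega

lemma par_no_swap (hr : p r = r) (hwf : ∀ v, ∃ n, p^[n] v = r) {u v : V}
    (h1 : p u = v) (h2 : p v = u) : u = v := by
  by_contra hne
  have hur : u ≠ r := by rintro rfl; rw [hr] at h1; exact hne h1
  have hvr : v ≠ r := by rintro rfl; rw [hr] at h2; exact hne h2.symm
  have e1 := rho_succ hwf hur
  have e2 := rho_succ hwf hvr
  rw [h1] at e1; rw [h2] at e2
  omega

/-- For an adjacency in `pGraph p` with `rho u ≥ rho v`, in fact `p u = v`. -/
lemma adj_parent (hr : p r = r) (hwf : ∀ v, ∃ n, p^[n] v = r) {u v : V}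
    (h : (pGraph p).Adj u v) (hrho : rho p r v ≤ rho p r u) : p u = v := by
  rcases h.2 with h2 | h2
  · exact h2
  · exfalso
    have hvr : v ≠ r := by
      rintro rfl; rw [hr] at h2; exact h.1 h2.symm
    have := rho_succ hwf hvr
    rw [h2] at this
    omega

end ParentMap
section ParentMap2

variable {V : Type*} [Fintype V]

/-- last edge of a non-nil walk. -/
lemma exists_last_edge {G : SimpleGraph V} {a b : V} (q : G.Walk a b) (h : ¬ q.Nil) :
    ∃ z, z ∈ q.support ∧ G.Adj z b ∧ s(z, b) ∈ q.edges := by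
  induction q with
  | nil => simp at h
  | @cons u x b hadj q ih =>
    by_cases hq : q.Nil
    · have : x = b := hq.eq
      subst this
      exact ⟨u, by simp, hadj, by simp⟩
    · obtain ⟨z, hz1, hz2, hz3⟩ := ih hq
      exact ⟨z, by simp [hz1], hz2, by simp [hz3]⟩

variable {p : V → V} {r : V}

lemma pGraph_connected (hr : p r = r) (hwf : ∀ v, ∃ n, p^[n] v = r) :
    (pGraph p).Connected := by
  have key : ∀ n (v : V), rho p r v ≤ n → (pGraph p).Reachable v r := by
    intro n
    induction n with
    | zero =>
      intro v hv
      by_cases h : v = r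
      · subst h; rfl
      · exfalso; have := rho_succ hwf h; omega
    | succ n ih =>
      intro v hv
      by_cases h : v = r
      · subst h; rfl
      · have hadj : (pGraph p).Adj v (p v) :=
          ⟨fun he => par_ne_self hwf h he.symm, Or.inl rfl⟩
        have := rho_succ hwf h
        exact (hadj.reachable).trans (ih (p v) (by omega))
  have : Nonempty V := ⟨r⟩
  exact ⟨fun u v => (key _ u le_rfl).trans (key _ v le_rfl).symm⟩

lemma pGraph_acyclic (hr : p r = r) (hwf : ∀ v, ∃ n, p^[n] v = r) :
    (pGraph p).IsAcyclic := by
  intro v c hc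
  -- pick a vertex of maximal rho on the support of c
  have hsupne : c.support.toFinset.Nonempty := by
    simp [List.toFinset_nonempty_iff]
  obtain ⟨x, hx, hxmax⟩ := Finset.exists_max_image c.support.toFinset (rho p r) hsupne
  rw [List.mem_toFinset] at hx
  have hmax : ∀ y ∈ c.support, rho p r y ≤ rho p r x := by
    intro y hy; exact hxmax y (List.mem_toFinset.2 hy)
  -- rotate the cycle to start at x
  have hc' : ((c.rotate x hx).IsCycle) := hc.rotate hx
  set c' : (pGraph p).Walk x x := c.rotate x hx with hc'def
  have hmax' : ∀ y ∈ c'.support, rho p r y ≤ rho p r x := by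
    intro y hy
    rw [SimpleGraph.Walk.support_eq_cons] at hy
    rcases List.mem_cons.1 hy with h | h
    · subst h; rfl
    · apply hmax
      have hrot := SimpleGraph.Walk.support_rotate c x hx
      have : y ∈ c.support.tail := (hrot.mem_iff).1 h
      rw [SimpleGraph.Walk.support_eq_cons c]
      exact List.mem_cons_of_mem _ this
  -- first neighbor
  have hnn : ¬ c'.Nil := hc'.not_nil
  have hadj1 : (pGraph p).Adj x (c'.getVert 1) := c'.adj_snd hnn
  have hy1 : c'.getVert 1 ∈ c'.support := by
    rw [SimpleGraph.Walk.mem_support_iff_exists_getVert]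
    exact ⟨1, rfl, by have := hc'.three_le_length; omega⟩
  have hpx1 : p x = c'.getVert 1 :=
    adj_parent hr hwf hadj1 (hmax' _ hy1)
  -- decompose c' = cons
  have hdecomp : SimpleGraph.Walk.cons (c'.adj_snd hnn) c'.tail = c' :=
    c'.cons_tail_eq hnn
  -- last edge of the tail
  have htailnil : ¬ c'.tail.Nil := by
    intro hnil
    have h3 := hc'.three_le_length
    have : c'.tail.length = 0 := SimpleGraph.Walk.nil_iff_length_eq.1 hnil
    have : c'.length = 1 := by
      have := SimpleGraph.Walk.length_tail_add_one hnn
      omega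
    omega
  obtain ⟨z, hz1, hz2, hz3⟩ := exists_last_edge c'.tail htailnil
  have hzsup : z ∈ c'.support := by
    rw [← hdecomp]
    simp [hz1]
  have hpxz : p x = z := adj_parent hr hwf hz2.symm (hmax' _ hzsup)
  -- so z = getVert 1, and the edge s(x, getVert 1) appears in the tail edges,
  -- but it is also the first edge: contradiction with trail nodup
  have hzy : z = c'.getVert 1 := by rw [← hpxz, hpx1]
  have hedge : s(x, c'.getVert 1) ∈ c'.tail.edges := by
    have heq : s(x, c'.getVert 1) = s(z, x) := by rw [hzy]; exact Sym2.eq_swap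
    rw [heq]
    exact hz3
  have htrail := hc'.isTrail
  rw [← hdecomp] at htrail
  rw [SimpleGraph.Walk.isTrail_cons] at htrail
  exact htrail.2 hedge

end ParentMap2


section ParentMap3

variable {V : Type*} [Fintype V]

/-- children of `v` under parent map `p` with root `r`. -/
noncomputable def childsF (p : V → V) (r : V) (v : V) : Finset V :=
  Finset.univ.filter (fun u => p u = v ∧ u ≠ r)

variable {p : V → V} {r : V}

lemma pGraph_isTree (hr : p r = r) (hwf : ∀ v, ∃ n, p^[n] v = r) :
    (pGraph p).IsTree :=
  ⟨pGraph_connected hr hwf, pGraph_acyclic hr hwf⟩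

lemma pGraph_degreeOf (hr : p r = r) (hwf : ∀ v, ∃ n, p^[n] v = r) (v : V) :
    degreeOf (pGraph p) v = (childsF p r v).card + (if v = r then 0 else 1) := by
  have hset : {u | (pGraph p).Adj v u} =
      ↑(Finset.univ.filter (fun u => (pGraph p).Adj v u)) := by
    ext u; simp
  rw [degreeOf, hset, Set.ncard_coe_finset]
  by_cases hv : v = r
  · subst hv
    rw [if_pos rfl]
    congr 1
    apply Finset.filter_congr
    intro u _
    simp only [pGraph_adj, childsF, eq_iff_iff]
    constructor
    · rintro ⟨hne, h | h⟩
      · exact absurd (hr.symm.trans h) hne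
      · exact ⟨h, fun hu => hne hu.symm⟩
    · rintro ⟨h1, h2⟩
      exact ⟨fun he => h2 he.symm, Or.inr h1⟩
  · rw [if_neg hv]
    have hfil : Finset.univ.filter (fun u => (pGraph p).Adj v u) =
        insert (p v) (childsF p r v) := by
      ext u
      simp only [Finset.mem_filter, Finset.mem_univ, true_and, Finset.mem_insert,
        pGraph_adj, childsF]
      constructor
      · rintro ⟨hne, h | h⟩
        · exact Or.inl h.symm
        · refine Or.inr ⟨h, ?_⟩
          rintro rfl
          rw [hr] at h
          exact hv h.symm
      · rintro (rfl | ⟨h1, h2⟩)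
        · exact ⟨fun he => par_ne_self hwf hv he.symm, Or.inl rfl⟩
        · refine ⟨?_, Or.inr h1⟩
          rintro rfl
          exact par_ne_self hwf h2 h1
    rw [hfil, Finset.card_insert_of_notMem]
    intro hmem
    simp only [childsF, Finset.mem_filter] at hmem
    obtain ⟨-, h1, h2⟩ := hmem
    have h3 := par_no_swap hr hwf h1 rfl
    exact par_ne_self hwf h2 (h1.trans h3.symm)

lemma pGraph_weightOf (w : V → V → ℝ) (hsym : ∀ u v, w u v = w v u)
    (hr : p r = r) (hwf : ∀ v, ∃ n, p^[n] v = r) :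
    weightOf (pGraph p) w = ∑ u ∈ Finset.univ.filter (fun u => u ≠ r), w u (p u) := by
  have hAB : ∀ u v : V, ¬((u ≠ r ∧ p u = v) ∧ (v ≠ r ∧ p v = u)) := by
    rintro u v ⟨⟨hur, h1⟩, ⟨hvr, h2⟩⟩
    have huv := par_no_swap hr hwf h1 h2
    subst huv
    exact par_ne_self hwf hur h1
  have hiff : ∀ u v : V, (pGraph p).Adj u v ↔ ((u ≠ r ∧ p u = v) ∨ (v ≠ r ∧ p v = u)) := by
    intro u v
    constructor
    · rintro ⟨hne, h | h⟩
      · refine Or.inl ⟨?_, h⟩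
        rintro rfl
        rw [hr] at h
        exact hne h
      · refine Or.inr ⟨?_, h⟩
        rintro rfl
        rw [hr] at h
        exact hne h.symm
    · rintro (⟨h1, h2⟩ | ⟨h1, h2⟩)
      · refine ⟨?_, Or.inl h2⟩
        rintro rfl
        exact par_ne_self hwf h1 h2
      · refine ⟨?_, Or.inr h2⟩
        rintro rfl
        exact par_ne_self hwf h1 h2
  have hsplit : ∀ u v : V, (if (pGraph p).Adj u v then w u v else 0) =
      (if u ≠ r ∧ p u = v then w u v else 0) + (if v ≠ r ∧ p v = u then w u v else 0) := by
    intro u v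
    by_cases hA : u ≠ r ∧ p u = v
    · rw [if_pos hA, if_neg (fun hB => hAB u v ⟨hA, hB⟩),
        if_pos ((hiff u v).2 (Or.inl hA)), add_zero]
    · by_cases hB : v ≠ r ∧ p v = u
      · rw [if_neg hA, if_pos hB, if_pos ((hiff u v).2 (Or.inr hB)), zero_add]
      · have hadj : ¬ (pGraph p).Adj u v := by
          intro h
          rcases (hiff u v).1 h with h' | h'
          · exact hA h'
          · exact hB h'
        rw [if_neg hA, if_neg hB, if_neg hadj, add_zero]
  rw [weightOf]
  have e1 : ∀ u : V, (∑ v : V, if u ≠ r ∧ p u = v then w u v else 0)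
      = if u ≠ r then w u (p u) else 0 := by
    intro u
    by_cases hu : u = r
    · simp [hu]
    · rw [if_pos hu]
      rw [Finset.sum_congr rfl (fun v _ => by rw [if_congr (iff_of_eq (by
            simp [hu] : (u ≠ r ∧ p u = v) = (p u = v))) rfl rfl])]
      simp
  have e2 : (∑ u : V, ∑ v : V, if v ≠ r ∧ p v = u then w u v else 0)
      = ∑ v : V, if v ≠ r then w v (p v) else 0 := by
    rw [Finset.sum_comm]
    apply Finset.sum_congr rfl
    intro v _
    by_cases hv : v = r
    · simp [hv]
    · rw [Finset.sum_congr rfl (fun u _ => by rw [if_congr (iff_of_eq (by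
            simp [hv] : (v ≠ r ∧ p v = u) = (p v = u))) rfl rfl])]
      simp [hsym v (p v), hv]
  calc (∑ u : V, ∑ v : V, if (pGraph p).Adj u v then w u v else 0) / 2
      = ((∑ u : V, ∑ v : V, if u ≠ r ∧ p u = v then w u v else 0)
        + (∑ u : V, ∑ v : V, if v ≠ r ∧ p v = u then w u v else 0)) / 2 := by
        congr 1
        rw [← Finset.sum_add_distrib]
        apply Finset.sum_congr rfl
        intro u _
        rw [← Finset.sum_add_distrib]
        exact Finset.sum_congr rfl (fun v _ => hsplit u v)
    _ = ((∑ u : V, if u ≠ r then w u (p u) else 0)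
        + (∑ v : V, if v ≠ r then w v (p v) else 0)) / 2 := by
        rw [e2]
        congr 1
        congr 1
        exact Finset.sum_congr rfl (fun u _ => e1 u)
    _ = ∑ u ∈ Finset.univ.filter (fun u => u ≠ r), w u (p u) := by
        rw [Finset.sum_filter]
        ring
end ParentMap3

section Pairing

lemma exists_pairing {V : Type*} [DecidableEq V] (s : Finset V) :
    ∃ (P : Finset V) (f : V → V), P ⊆ s ∧ (∀ x ∈ P, f x ∈ P ∧ f (f x) = x ∧ f x ≠ x) ∧
      P.card = 2 * (s.card / 2) := by
  induction s using Finset.strongInduction with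
  | _ s ih =>
    by_cases h1 : s.card ≤ 1
    · refine ⟨∅, id, Finset.empty_subset s, by simp, ?_⟩
      simp only [Finset.card_empty]
      omega
    · push_neg at h1
      have hx : s.Nonempty := Finset.card_pos.1 (by omega)
      obtain ⟨x, hxs⟩ := hx
      have hy : (s.erase x).Nonempty := by
        rw [← Finset.card_pos, Finset.card_erase_of_mem hxs]
        omega
      obtain ⟨y, hys⟩ := hy
      have hyx : y ≠ x := Finset.ne_of_mem_erase hys
      have hys' : y ∈ s := Finset.mem_of_mem_erase hys
      set t := (s.erase x).erase y with ht
      have htsub : t ⊂ s := by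
        refine Finset.ssubset_iff_of_subset ?_ |>.2 ⟨x, hxs, ?_⟩
        · exact (Finset.erase_subset _ _).trans (Finset.erase_subset _ _)
        · simp [ht]
      obtain ⟨P₀, f₀, hsub₀, hf₀, hcard₀⟩ := ih t htsub
      have hxP₀ : x ∉ P₀ := fun h => by
        have hh := hsub₀ h
        rw [ht] at hh
        simp at hh
      have hyP₀ : y ∉ P₀ := fun h => by
        have hh := hsub₀ h
        rw [ht] at hh
        simp at hh
      refine ⟨insert x (insert y P₀), fun z => if z = x then y else if z = y then x else f₀ z,
        ?_, ?_, ?_⟩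
      · intro z hz
        simp only [Finset.mem_insert] at hz
        rcases hz with rfl | rfl | hz
        · exact hxs
        · exact hys'
        · exact (Finset.erase_subset _ _) (Finset.mem_of_mem_erase (hsub₀ hz))
      · intro z hz
        simp only [Finset.mem_insert] at hz
        rcases hz with rfl | rfl | hz
        · refine ⟨?_, ?_, ?_⟩
          · simp [hyx]
          · simp [hyx]
          · simp only [if_pos rfl]
            exact hyx
        · refine ⟨?_, ?_, ?_⟩
          · simp [hyx]
          · simp [hyx]
          · simp only [if_neg hyx, if_pos rfl]
            exact fun h => hyx h.symm
        · have hzx : z ≠ x := fun h => hxP₀ (h ▸ hz)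
          have hzy : z ≠ y := fun h => hyP₀ (h ▸ hz)
          obtain ⟨hm, hff, hne⟩ := hf₀ z hz
          have hfx : f₀ z ≠ x := fun h => hxP₀ (h ▸ hm)
          have hfy : f₀ z ≠ y := fun h => hyP₀ (h ▸ hm)
          refine ⟨?_, ?_, ?_⟩
          · simp [hzx, hzy, hfx, hfy, hm]
          · simp [hzx, hzy, hfx, hfy, hff]
          · simp [hzx, hzy, hne]
      · rw [Finset.card_insert_of_notMem (by simp [hyx.symm, hxP₀]),
          Finset.card_insert_of_notMem hyP₀, hcard₀]
        have htc : t.card = s.card - 2 := by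
          rw [ht, Finset.card_erase_of_mem hys, Finset.card_erase_of_mem hxs]
          omega
        rw [htc]
        omega

end Pairing

section Construct

variable {V : Type*} [Fintype V]

noncomputable def ustarF (p : V → V) (r : V) (P : V → Finset V) (v : V) : V :=
  if h : (childsF p r v \ P v).Nonempty then h.choose else v

noncomputable def alphaA (p : V → V) (r : V) (P : V → Finset V) : ℕ → V → V
  | 0, v => v
  | (n+1), v =>
      if Odd (childsF p r v).card then alphaA p r P n (ustarF p r P v) else v

noncomputable def alphaF (p : V → V) (r : V) (P : V → Finset V) (v : V) : V :=
  alphaA p r P (Fintype.card V) v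

noncomputable def DsetA (p : V → V) (r : V) (P : V → Finset V) : ℕ → V → Finset V
  | 0, v => {v}
  | (n+1), v =>
      if Odd (childsF p r v).card then insert v (DsetA p r P n (ustarF p r P v)) else {v}

noncomputable def DsetF (p : V → V) (r : V) (P : V → Finset V) (v : V) : Finset V :=
  DsetA p r P (Fintype.card V) v

noncomputable def betaA (p : V → V) (r : V) (P : V → Finset V) : ℕ → V → V
  | 0, v => v
  | (n+1), v => if v ≠ r ∧ v ∉ P (p v) then betaA p r P n (p v) else v

noncomputable def betaF (p : V → V) (r : V) (P : V → Finset V) (v : V) : V :=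
  betaA p r P (Fintype.card V) v

noncomputable def costF (p : V → V) (r : V) (P : V → Finset V) (w : V → V → ℝ) (v : V) : ℝ :=
  ∑ x ∈ DsetF p r P v, w (p x) x

/-- strict "key" comparison used to orient each pair -/
def kltF (p : V → V) (r : V) (P : V → Finset V) (w : V → V → ℝ) (ι : V → ℕ) (a b : V) : Prop :=
  costF p r P w a < costF p r P w b ∨
    (costF p r P w a = costF p r P w b ∧ ι a < ι b)

def isBF (p : V → V) (r : V) (P : V → Finset V) (f : V → V → V) (w : V → V → ℝ) (ι : V → ℕ)
    (u : V) : Prop :=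
  u ≠ r ∧ u ∈ P (p u) ∧ kltF p r P w ι (f (p u) u) u

noncomputable def parB (p : V → V) (r : V) (P : V → Finset V) (f : V → V → V)
    (w : V → V → ℝ) (ι : V → ℕ) (u : V) : V :=
  if isBF p r P f w ι u then alphaF p r P (f (p u) u) else p u

variable {p : V → V} {r : V} {P : V → Finset V}

lemma rho_lt_card (hwf : ∀ v, ∃ n, p^[n] v = r) (v : V) :
    rho p r v < Fintype.card V := by
  -- the iterates p^[i] v for i ≤ rho are pairwise distinct
  have h1 : ∃ n, p^[n] v = r := hwf v
  have hrho : rho p r v = Nat.find h1 := by rw [rho, dif_pos h1]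
  have key : ∀ i j : ℕ, i < j → j ≤ rho p r v → p^[i] v = p^[j] v → False := by
    intro i j hlt hj hij
    have hspec : p^[rho p r v] v = r := by rw [hrho]; exact Nat.find_spec h1
    have hfast : p^[rho p r v - j + i] v = r := by
      calc p^[rho p r v - j + i] v
          = p^[rho p r v - j] (p^[i] v) := by rw [← Function.iterate_add_apply]
        _ = p^[rho p r v - j] (p^[j] v) := by rw [hij]
        _ = p^[rho p r v - j + j] v := by rw [← Function.iterate_add_apply]
        _ = p^[rho p r v] v := by congr 1; omega
        _ = r := hspec
    have hle := Nat.find_min' h1 hfast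
    rw [← hrho] at hle
    omega
  have hinj : Function.Injective
      (fun i : Fin (rho p r v + 1) => p^[(i : ℕ)] v) := by
    intro i j hij
    simp only at hij
    rcases Nat.lt_trichotomy (i : ℕ) (j : ℕ) with h | h | h
    · exact absurd hij (fun hh => key _ _ h (by omega) hh)
    · exact Fin.ext h
    · exact absurd hij.symm (fun hh => key _ _ h (by omega) hh)
  have := Fintype.card_le_of_injective _ hinj
  simp at this
  omega

lemma childsF_rho (hwf : ∀ v, ∃ n, p^[n] v = r) {v u : V} (hu : u ∈ childsF p r v) :
    rho p r u = rho p r v + 1 := by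
  simp only [childsF, Finset.mem_filter] at hu
  rw [rho_succ hwf hu.2.2, hu.2.1]

lemma ustarF_mem (hPsub : ∀ v, P v ⊆ childsF p r v)
    (hPcard : ∀ v, (P v).card = 2 * ((childsF p r v).card / 2))
    {v : V} (hodd : Odd (childsF p r v).card) :
    ustarF p r P v ∈ childsF p r v ∧ ustarF p r P v ∉ P v := by
  have hne : (childsF p r v \ P v).Nonempty := by
    rw [← Finset.card_pos, Finset.card_sdiff_of_subset (hPsub v), hPcard v]
    obtain ⟨k, hk⟩ := hodd
    omega
  rw [ustarF, dif_pos hne]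
  have := hne.choose_spec
  rw [Finset.mem_sdiff] at this
  exact this

end Construct

section ConstructLemmas

variable {V : Type*} [Fintype V] {p : V → V} {r : V} {P : V → Finset V}

lemma alphaA_fuel (hwf : ∀ v, ∃ n, p^[n] v = r)
    (hPsub : ∀ v, P v ⊆ childsF p r v)
    (hPcard : ∀ v, (P v).card = 2 * ((childsF p r v).card / 2)) :
    ∀ n m v, Fintype.card V ≤ n + rho p r v → Fintype.card V ≤ m + rho p r v →
    alphaA p r P n v = alphaA p r P m v := by
  intro n
  induction n with
  | zero =>
    intro m v h _
    exact absurd (rho_lt_card hwf v) (by omega)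
  | succ n ih =>
    intro m v hn hm
    match m with
    | 0 => exact absurd (rho_lt_card hwf v) (by omega)
    | Nat.succ m =>
      simp only [alphaA]
      by_cases hodd : Odd (childsF p r v).card
      · rw [if_pos hodd, if_pos hodd]
        have hmem := (ustarF_mem hPsub hPcard hodd).1
        have hrho := childsF_rho hwf hmem
        exact ih m (ustarF p r P v) (by omega) (by omega)
      · rw [if_neg hodd, if_neg hodd]

lemma alphaF_eq (hwf : ∀ v, ∃ n, p^[n] v = r)
    (hPsub : ∀ v, P v ⊆ childsF p r v)
    (hPcard : ∀ v, (P v).card = 2 * ((childsF p r v).card / 2)) (v : V) :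
    alphaF p r P v =
      if Odd (childsF p r v).card then alphaF p r P (ustarF p r P v) else v := by
  have h1 : 1 ≤ Fintype.card V := by have := rho_lt_card hwf v; omega
  obtain ⟨c, hc⟩ : ∃ c, Fintype.card V = c + 1 := ⟨Fintype.card V - 1, by omega⟩
  rw [alphaF, hc]
  simp only [alphaA]
  by_cases hodd : Odd (childsF p r v).card
  · rw [if_pos hodd, if_pos hodd]
    have hmem := (ustarF_mem hPsub hPcard hodd).1
    have hrho := childsF_rho hwf hmem
    rw [alphaF, hc]
    exact alphaA_fuel hwf hPsub hPcard c (c+1) _ (by have := rho_lt_card hwf (ustarF p r P v); omega)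
      (by have := rho_lt_card hwf (ustarF p r P v); omega)
  · rw [if_neg hodd, if_neg hodd]

lemma DsetA_fuel (hwf : ∀ v, ∃ n, p^[n] v = r)
    (hPsub : ∀ v, P v ⊆ childsF p r v)
    (hPcard : ∀ v, (P v).card = 2 * ((childsF p r v).card / 2)) :
    ∀ n m v, Fintype.card V ≤ n + rho p r v → Fintype.card V ≤ m + rho p r v →
    DsetA p r P n v = DsetA p r P m v := by
  intro n
  induction n with
  | zero =>
    intro m v h _
    exact absurd (rho_lt_card hwf v) (by omega)
  | succ n ih =>
    intro m v hn hm
    match m with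
    | 0 => exact absurd (rho_lt_card hwf v) (by omega)
    | Nat.succ m =>
      simp only [DsetA]
      by_cases hodd : Odd (childsF p r v).card
      · rw [if_pos hodd, if_pos hodd]
        have hmem := (ustarF_mem hPsub hPcard hodd).1
        have hrho := childsF_rho hwf hmem
        rw [ih m (ustarF p r P v) (by omega) (by omega)]
      · rw [if_neg hodd, if_neg hodd]

lemma DsetF_eq (hwf : ∀ v, ∃ n, p^[n] v = r)
    (hPsub : ∀ v, P v ⊆ childsF p r v)
    (hPcard : ∀ v, (P v).card = 2 * ((childsF p r v).card / 2)) (v : V) :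
    DsetF p r P v =
      if Odd (childsF p r v).card then insert v (DsetF p r P (ustarF p r P v)) else {v} := by
  have h1 : 1 ≤ Fintype.card V := by have := rho_lt_card hwf v; omega
  obtain ⟨c, hc⟩ : ∃ c, Fintype.card V = c + 1 := ⟨Fintype.card V - 1, by omega⟩
  rw [DsetF, hc]
  simp only [DsetA]
  by_cases hodd : Odd (childsF p r v).card
  · rw [if_pos hodd, if_pos hodd]
    have hmem := (ustarF_mem hPsub hPcard hodd).1
    have hrho := childsF_rho hwf hmem
    rw [DsetF, hc]
    rw [DsetA_fuel hwf hPsub hPcard c (c+1) _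
      (by have := rho_lt_card hwf (ustarF p r P v); omega)
      (by have := rho_lt_card hwf (ustarF p r P v); omega)]
  · rw [if_neg hodd, if_neg hodd]

lemma betaA_fuel (hwf : ∀ v, ∃ n, p^[n] v = r) :
    ∀ n m v, rho p r v ≤ n → rho p r v ≤ m →
    betaA p r P n v = betaA p r P m v := by
  intro n
  induction n with
  | zero =>
    intro m v h _
    have hvr : v = r := by
      by_contra hne
      have := rho_succ hwf hne
      omega
    subst hvr
    match m with
    | 0 => rfl
    | Nat.succ m => simp [betaA]
  | succ n ih =>
    intro m v hn hm
    match m with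
    | 0 =>
      have hvr : v = r := by
        by_contra hne
        have := rho_succ hwf hne
        omega
      subst hvr
      simp [betaA]
    | Nat.succ m =>
      simp only [betaA]
      by_cases hu : v ≠ r ∧ v ∉ P (p v)
      · rw [if_pos hu, if_pos hu]
        have := rho_succ hwf hu.1
        exact ih m (p v) (by omega) (by omega)
      · rw [if_neg hu, if_neg hu]

lemma betaF_eq (hwf : ∀ v, ∃ n, p^[n] v = r) (v : V) :
    betaF p r P v = if v ≠ r ∧ v ∉ P (p v) then betaF p r P (p v) else v := by
  have h1 : 1 ≤ Fintype.card V := by have := rho_lt_card hwf v; omega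
  obtain ⟨c, hc⟩ : ∃ c, Fintype.card V = c + 1 := ⟨Fintype.card V - 1, by omega⟩
  rw [betaF, hc]
  simp only [betaA]
  by_cases hu : v ≠ r ∧ v ∉ P (p v)
  · rw [if_pos hu, if_pos hu]
    rw [betaF, hc]
    have := rho_succ hwf hu.1
    exact betaA_fuel hwf c (c+1) _ (by have := rho_lt_card hwf (p v); omega)
      (by have := rho_lt_card hwf (p v); omega)
  · rw [if_neg hu, if_neg hu]

end ConstructLemmas

section ConstructLemmas2

variable {V : Type*} [Fintype V] {p : V → V} {r : V} {P : V → Finset V}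

lemma ustarF_not_isB (hPsub : ∀ v, P v ⊆ childsF p r v)
    (hPcard : ∀ v, (P v).card = 2 * ((childsF p r v).card / 2))
    {v : V} (hodd : Odd (childsF p r v).card) {f : V → V → V} {w : V → V → ℝ} {ι : V → ℕ} :
    ¬ isBF p r P f w ι (ustarF p r P v) ∧ p (ustarF p r P v) = v ∧ ustarF p r P v ≠ r := by
  obtain ⟨hmem, hnP⟩ := ustarF_mem hPsub hPcard hodd
  simp only [childsF, Finset.mem_filter] at hmem
  refine ⟨?_, hmem.2.1, hmem.2.2⟩
  rintro ⟨h1, h2, h3⟩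
  rw [hmem.2.1] at h2
  exact hnP h2

lemma alphaF_not_odd (hwf : ∀ v, ∃ n, p^[n] v = r)
    (hPsub : ∀ v, P v ⊆ childsF p r v)
    (hPcard : ∀ v, (P v).card = 2 * ((childsF p r v).card / 2)) (v : V) :
    ¬ Odd (childsF p r (alphaF p r P v)).card := by
  have key : ∀ n v, Fintype.card V ≤ n + rho p r v →
      ¬ Odd (childsF p r (alphaF p r P v)).card := by
    intro n
    induction n with
    | zero => intro v h; exact absurd (rho_lt_card hwf v) (by omega)
    | succ n ih =>
      intro v hn
      rw [alphaF_eq hwf hPsub hPcard]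
      by_cases hodd : Odd (childsF p r v).card
      · rw [if_pos hodd]
        have hmem := (ustarF_mem hPsub hPcard hodd).1
        have hrho := childsF_rho hwf hmem
        exact ih _ (by omega)
      · rw [if_neg hodd]; exact hodd
  exact key (Fintype.card V) v (by have := rho_lt_card hwf v; omega)

lemma betaF_alphaF (hwf : ∀ v, ∃ n, p^[n] v = r)
    (hPsub : ∀ v, P v ⊆ childsF p r v)
    (hPcard : ∀ v, (P v).card = 2 * ((childsF p r v).card / 2)) (v : V) :
    betaF p r P (alphaF p r P v) = betaF p r P v := by
  have key : ∀ n v, Fintype.card V ≤ n + rho p r v →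
      betaF p r P (alphaF p r P v) = betaF p r P v := by
    intro n
    induction n with
    | zero => intro v h; exact absurd (rho_lt_card hwf v) (by omega)
    | succ n ih =>
      intro v hn
      rw [alphaF_eq hwf hPsub hPcard]
      by_cases hodd : Odd (childsF p r v).card
      · rw [if_pos hodd]
        obtain ⟨hmem, hnP⟩ := ustarF_mem hPsub hPcard hodd
        have hrho := childsF_rho hwf hmem
        rw [ih _ (by omega)]
        simp only [childsF, Finset.mem_filter] at hmem
        rw [betaF_eq hwf (ustarF p r P v)]
        rw [if_pos ⟨hmem.2.2, by rw [hmem.2.1]; exact hnP⟩, hmem.2.1]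
      · rw [if_neg hodd]
  exact key (Fintype.card V) v (by have := rho_lt_card hwf v; omega)

lemma DsetF_beta (hwf : ∀ v, ∃ n, p^[n] v = r)
    (hPsub : ∀ v, P v ⊆ childsF p r v)
    (hPcard : ∀ v, (P v).card = 2 * ((childsF p r v).card / 2)) {v x : V}
    (hx : x ∈ DsetF p r P v) : betaF p r P x = betaF p r P v := by
  have key : ∀ n v x, Fintype.card V ≤ n + rho p r v → x ∈ DsetF p r P v →
      betaF p r P x = betaF p r P v := by
    intro n
    induction n with
    | zero => intro v x h _; exact absurd (rho_lt_card hwf v) (by omega)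
    | succ n ih =>
      intro v x hn hx
      rw [DsetF_eq hwf hPsub hPcard] at hx
      by_cases hodd : Odd (childsF p r v).card
      · rw [if_pos hodd, Finset.mem_insert] at hx
        rcases hx with rfl | hx
        · rfl
        · obtain ⟨hmem, hnP⟩ := ustarF_mem hPsub hPcard hodd
          have hrho := childsF_rho hwf hmem
          rw [ih _ _ (by omega) hx]
          simp only [childsF, Finset.mem_filter] at hmem
          rw [betaF_eq hwf (ustarF p r P v)]
          rw [if_pos ⟨hmem.2.2, by rw [hmem.2.1]; exact hnP⟩, hmem.2.1]
      · rw [if_neg hodd, Finset.mem_singleton] at hx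
        subst hx; rfl
  exact key (Fintype.card V) v x (by have := rho_lt_card hwf v; omega) hx

lemma DsetF_rho (hwf : ∀ v, ∃ n, p^[n] v = r)
    (hPsub : ∀ v, P v ⊆ childsF p r v)
    (hPcard : ∀ v, (P v).card = 2 * ((childsF p r v).card / 2)) {v x : V}
    (hx : x ∈ DsetF p r P v) : rho p r v ≤ rho p r x := by
  have key : ∀ n v x, Fintype.card V ≤ n + rho p r v → x ∈ DsetF p r P v →
      rho p r v ≤ rho p r x := by
    intro n
    induction n with
    | zero => intro v x h _; exact absurd (rho_lt_card hwf v) (by omega)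
    | succ n ih =>
      intro v x hn hx
      rw [DsetF_eq hwf hPsub hPcard] at hx
      by_cases hodd : Odd (childsF p r v).card
      · rw [if_pos hodd, Finset.mem_insert] at hx
        rcases hx with rfl | hx
        · exact le_refl _
        · have hmem := (ustarF_mem hPsub hPcard hodd).1
          have hrho := childsF_rho hwf hmem
          have h2 := ih (ustarF p r P v) x (by omega) hx
          omega
      · rw [if_neg hodd, Finset.mem_singleton] at hx
        subst hx
        exact le_refl _
  exact key (Fintype.card V) v x (by have := rho_lt_card hwf v; omega) hx

lemma alphaF_rho (hwf : ∀ v, ∃ n, p^[n] v = r)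
    (hPsub : ∀ v, P v ⊆ childsF p r v)
    (hPcard : ∀ v, (P v).card = 2 * ((childsF p r v).card / 2)) (v : V) :
    rho p r v ≤ rho p r (alphaF p r P v) := by
  have key : ∀ n v, Fintype.card V ≤ n + rho p r v →
      rho p r v ≤ rho p r (alphaF p r P v) := by
    intro n
    induction n with
    | zero => intro v h; exact absurd (rho_lt_card hwf v) (by omega)
    | succ n ih =>
      intro v hn
      rw [alphaF_eq hwf hPsub hPcard]
      by_cases hodd : Odd (childsF p r v).card
      · rw [if_pos hodd]
        have hmem := (ustarF_mem hPsub hPcard hodd).1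
        have hrho := childsF_rho hwf hmem
        have h2 := ih (ustarF p r P v) (by omega)
        omega
      · rw [if_neg hodd]
  exact key (Fintype.card V) v (by have := rho_lt_card hwf v; omega)

lemma costF_eq (hwf : ∀ v, ∃ n, p^[n] v = r)
    (hPsub : ∀ v, P v ⊆ childsF p r v)
    (hPcard : ∀ v, (P v).card = 2 * ((childsF p r v).card / 2))
    (w : V → V → ℝ) (v : V) :
    costF p r P w v = if Odd (childsF p r v).card then
      w (p v) v + costF p r P w (ustarF p r P v) else w (p v) v := by
  rw [costF, DsetF_eq hwf hPsub hPcard]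
  by_cases hodd : Odd (childsF p r v).card
  · rw [if_pos hodd, if_pos hodd]
    have hmem := (ustarF_mem hPsub hPcard hodd).1
    have hrho := childsF_rho hwf hmem
    rw [Finset.sum_insert]
    · rfl
    · intro hmem'
      have := DsetF_rho hwf hPsub hPcard hmem'
      omega
  · rw [if_neg hodd, if_neg hodd, Finset.sum_singleton]

lemma chain_triangle (hwf : ∀ v, ∃ n, p^[n] v = r)
    (hPsub : ∀ v, P v ⊆ childsF p r v)
    (hPcard : ∀ v, (P v).card = 2 * ((childsF p r v).card / 2))
    (w : V → V → ℝ) (hsym : ∀ u v, w u v = w v u)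
    (htri : ∀ u x v, w u v ≤ w u x + w x v) (v x : V) :
    w x (alphaF p r P v) + w (p v) v ≤ w x v + costF p r P w v := by
  have key : ∀ n v x, Fintype.card V ≤ n + rho p r v →
      w x (alphaF p r P v) + w (p v) v ≤ w x v + costF p r P w v := by
    intro n
    induction n with
    | zero => intro v x h; exact absurd (rho_lt_card hwf v) (by omega)
    | succ n ih =>
      intro v x hn
      rw [alphaF_eq hwf hPsub hPcard, costF_eq hwf hPsub hPcard]
      by_cases hodd : Odd (childsF p r v).card
      · rw [if_pos hodd, if_pos hodd]
        obtain ⟨hmem, -⟩ := ustarF_mem hPsub hPcard hodd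
        have hrho := childsF_rho hwf hmem
        have hih := ih (ustarF p r P v) x (by omega)
        have hpu : p (ustarF p r P v) = v := by
          simp only [childsF, Finset.mem_filter] at hmem
          exact hmem.2.1
        rw [hpu] at hih
        have htr : w x (ustarF p r P v) ≤ w x v + w v (ustarF p r P v) :=
          htri x v (ustarF p r P v)
        linarith
      · rw [if_neg hodd, if_neg hodd]
  exact key (Fintype.card V) v x (by have := rho_lt_card hwf v; omega)

end ConstructLemmas2

section TreeParent

variable {V : Type*} [Fintype V]

lemma tree_parent {T : SimpleGraph V} (hT : T.IsTree) (r : V) :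
    ∃ par : V → V, par r = r ∧ (∀ v, ∃ n, par^[n] v = r) ∧
      (∀ u v, T.Adj u v ↔ u ≠ v ∧ (par u = v ∨ par v = u)) := by
  classical
  have hpath := hT.existsUnique_path
  have H : ∀ v : V, ∃ q : T.Walk r v, q.IsPath ∧ ∀ q' : T.Walk r v, q'.IsPath → q' = q := by
    intro v
    obtain ⟨q, hq, huniq⟩ := hpath r v
    exact ⟨q, hq, fun q' hq' => huniq q' hq'⟩
  choose pa hpa huniq using H
  have hparr : pa r = SimpleGraph.Walk.nil := by
    have := (SimpleGraph.Walk.isPath_iff_eq_nil (p := pa r)).1 (hpa r)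
    exact this
  set par : V → V := fun v => if h : v = r then r else (pa v).reverse.getVert 1 with hpar
  -- basic facts
  have hnn : ∀ v : V, v ≠ r → ¬ (pa v).Nil := by
    intro v hv
    exact SimpleGraph.Walk.not_nil_of_ne (fun h => hv h.symm)
  have hnnrev : ∀ v : V, v ≠ r → ¬ (pa v).reverse.Nil := by
    intro v hv
    exact SimpleGraph.Walk.not_nil_of_ne hv
  have hadj : ∀ v : V, v ≠ r → T.Adj v (par v) := by
    intro v hv
    rw [hpar]
    simp only [dif_neg hv]
    exact (pa v).reverse.adj_snd (hnnrev v hv)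
  have hdep : ∀ v : V, v ≠ r → (pa (par v)).length + 1 = (pa v).length := by
    intro v hv
    have hnr := hnnrev v hv
    set q := (pa v).reverse.tail with hq
    have hcons : SimpleGraph.Walk.cons ((pa v).reverse.adj_snd hnr) q
        = (pa v).reverse := (pa v).reverse.cons_tail_eq hnr
    have hqpath : q.IsPath := ((hpa v).reverse).tail
    have hqrev : q.reverse.IsPath := hqpath.reverse
    have hparv : par v = (pa v).reverse.getVert 1 := by rw [hpar]; simp [dif_neg hv]
    have : pa ((pa v).reverse.getVert 1) = q.reverse := (huniq _ q.reverse hqrev).symm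
    rw [hparv, this]
    have hlq : q.length + 1 = (pa v).reverse.length :=
      SimpleGraph.Walk.length_tail_add_one hnr
    rw [SimpleGraph.Walk.length_reverse] at hlq
    rw [SimpleGraph.Walk.length_reverse]
    exact hlq
  have hdep0 : ∀ v : V, (pa v).length = 0 → v = r := by
    intro v h
    have : (pa v).Nil := SimpleGraph.Walk.nil_iff_length_eq.2 h
    exact this.eq.symm
  refine ⟨par, by simp [hpar], ?_, ?_⟩
  · -- well-foundedness
    have key : ∀ n v, (pa v).length ≤ n → ∃ m, par^[m] v = r := by
      intro n
      induction n with
      | zero =>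
        intro v hv
        have := hdep0 v (by omega)
        exact ⟨0, this⟩
      | succ n ih =>
        intro v hv
        by_cases h : v = r
        · exact ⟨0, h⟩
        · have := hdep v h
          obtain ⟨m, hm⟩ := ih (par v) (by omega)
          exact ⟨m + 1, by rw [Function.iterate_succ_apply, hm]⟩
    intro v
    exact key (pa v).length v le_rfl
  · -- adjacency characterization
    intro u v
    constructor
    · intro h
      refine ⟨h.ne, ?_⟩
      by_cases hvin : v ∈ (pa u).support
      · -- v lies on the path to u; show par u = v
        left
        have hur : u ≠ r := by
          rintro rfl
          rw [hparr] at hvin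
          simp at hvin
          exact h.ne hvin.symm
        -- pa v is the take-until part
        have htake : (pa u).takeUntil v hvin |>.IsPath := (hpa u).takeUntil hvin
        have hpav : pa v = (pa u).takeUntil v hvin := (huniq v _ htake).symm
        -- u not in support of pa v
        have hspec := (pa u).take_spec hvin
        have hnodup := (hpa u).support_nodup
        rw [← hspec] at hnodup
        rw [SimpleGraph.Walk.support_append] at hnodup
        have hdisj := List.disjoint_of_nodup_append hnodup
        have hune : u ≠ v := h.ne
        have humem : u ∈ ((pa u).dropUntil v hvin).support.tail := by
          have h1 : u ∈ ((pa u).dropUntil v hvin).support :=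
            SimpleGraph.Walk.end_mem_support _
          rw [SimpleGraph.Walk.support_eq_cons] at h1
          rcases List.mem_cons.1 h1 with h2 | h2
          · exact absurd h2.symm hune.symm
          · exact h2
        have hunotin : u ∉ (pa v).support := by
          rw [hpav]
          intro hmem
          exact hdisj hmem humem
        -- extend pa v by the edge v-u
        have hQ : ((pa v).concat h.symm).IsPath := by
          rw [← SimpleGraph.Walk.isPath_reverse_iff]
          rw [SimpleGraph.Walk.reverse_concat]
          rw [SimpleGraph.Walk.cons_isPath_iff]
          constructor
          · exact (hpa v).reverse
          · rw [SimpleGraph.Walk.support_reverse, List.mem_reverse]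
            exact hunotin
        have hQu : pa u = (pa v).concat h.symm := (huniq u _ hQ).symm
        rw [hpar]
        simp only [dif_neg hur]
        rw [hQu, SimpleGraph.Walk.reverse_concat]
        exact SimpleGraph.Walk.snd_cons _ _
      · -- v is not on the path to u: par v = u
        right
        have hvr : v ≠ r := by
          rintro rfl
          exact hvin (SimpleGraph.Walk.start_mem_support _)
        have hQ : ((pa u).concat h).IsPath := by
          rw [← SimpleGraph.Walk.isPath_reverse_iff]
          rw [SimpleGraph.Walk.reverse_concat]
          rw [SimpleGraph.Walk.cons_isPath_iff]
          constructor
          · exact (hpa u).reverse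
          · rw [SimpleGraph.Walk.support_reverse, List.mem_reverse]
            exact hvin
        have hQv : pa v = (pa u).concat h := (huniq v _ hQ).symm
        rw [hpar]
        simp only [dif_neg hvr]
        rw [hQv, SimpleGraph.Walk.reverse_concat]
        exact SimpleGraph.Walk.snd_cons _ _
    · rintro ⟨hne, h | h⟩
      · have hur : u ≠ r := by
          rintro rfl
          rw [hpar] at h
          simp at h
          exact hne h
        have := hadj u hur
        rw [h] at this
        exact this
      · have hvr : v ≠ r := by
          rintro rfl
          rw [hpar] at h
          simp at h
          exact hne h.symm
        have := hadj v hvr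
        rw [h] at this
        exact this.symm

end TreeParent

section ParBLemmas

variable {V : Type*} [Fintype V] {p : V → V} {r : V} {P : V → Finset V}
  {f : V → V → V} {w : V → V → ℝ} {ι : V → ℕ}

lemma klt_asymm {a b : V} (h1 : kltF p r P w ι a b) (h2 : kltF p r P w ι b a) : False := by
  rcases h1 with h1 | ⟨h1, h1'⟩ <;> rcases h2 with h2 | ⟨h2, h2'⟩ <;> linarith

lemma klt_total (hι : Function.Injective ι) {a b : V} (hne : a ≠ b) :
    kltF p r P w ι a b ∨ kltF p r P w ι b a := by
  rcases lt_trichotomy (costF p r P w a) (costF p r P w b) with h | h | h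
  · exact Or.inl (Or.inl h)
  · rcases Nat.lt_trichotomy (ι a) (ι b) with h' | h' | h'
    · exact Or.inl (Or.inr ⟨h, h'⟩)
    · exact absurd (hι h') hne
    · exact Or.inr (Or.inr ⟨h.symm, h'⟩)
  · exact Or.inr (Or.inl h)

lemma mate_facts (hPsub : ∀ v, P v ⊆ childsF p r v)
    (hPf : ∀ v, ∀ x ∈ P v, f v x ∈ P v ∧ f v (f v x) = x ∧ f v x ≠ x)
    {u : V} (hu : u ≠ r) (hp : u ∈ P (p u)) :
    f (p u) u ∈ P (p u) ∧ p (f (p u) u) = p u ∧ f (p u) u ≠ r ∧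
      f (p u) (f (p u) u) = u ∧ f (p u) u ≠ u := by
  obtain ⟨hm, hff, hne⟩ := hPf (p u) u hp
  have hc := hPsub (p u) hm
  simp only [childsF, Finset.mem_filter] at hc
  exact ⟨hm, hc.2.1, hc.2.2, hff, hne⟩

lemma mate_not_isB (hPsub : ∀ v, P v ⊆ childsF p r v)
    (hPf : ∀ v, ∀ x ∈ P v, f v x ∈ P v ∧ f v (f v x) = x ∧ f v x ≠ x)
    {u : V} (hB : isBF p r P f w ι u) : ¬ isBF p r P f w ι (f (p u) u) := by
  obtain ⟨hu, hp, hklt⟩ := hB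
  obtain ⟨hm, hpp, hnr, hff, hne⟩ := mate_facts hPsub hPf hu hp
  rintro ⟨h1, h2, h3⟩
  rw [hpp, hff] at h3
  exact klt_asymm hklt h3

lemma isB_or_mate_isB (hPsub : ∀ v, P v ⊆ childsF p r v)
    (hPf : ∀ v, ∀ x ∈ P v, f v x ∈ P v ∧ f v (f v x) = x ∧ f v x ≠ x)
    (hι : Function.Injective ι)
    {u : V} (hu : u ≠ r) (hp : u ∈ P (p u)) :
    isBF p r P f w ι u ∨ isBF p r P f w ι (f (p u) u) := by
  obtain ⟨hm, hpp, hnr, hff, hne⟩ := mate_facts hPsub hPf hu hp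
  rcases klt_total (p := p) (r := r) (P := P) (w := w) hι hne with h | h
  · left
    exact ⟨hu, hp, h⟩
  · right
    refine ⟨hnr, by rw [hpp]; exact hm, ?_⟩
    rw [hpp, hff]
    exact h

lemma alphaF_parB_reach (hwf : ∀ v, ∃ n, p^[n] v = r)
    (hPsub : ∀ v, P v ⊆ childsF p r v)
    (hPcard : ∀ v, (P v).card = 2 * ((childsF p r v).card / 2)) (v : V) :
    ∃ m, (parB p r P f w ι)^[m] (alphaF p r P v) = v := by
  have key : ∀ n v, Fintype.card V ≤ n + rho p r v →
      ∃ m, (parB p r P f w ι)^[m] (alphaF p r P v) = v := by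
    intro n
    induction n with
    | zero => intro v h; exact absurd (rho_lt_card hwf v) (by omega)
    | succ n ih =>
      intro v hn
      rw [alphaF_eq hwf hPsub hPcard]
      by_cases hodd : Odd (childsF p r v).card
      · rw [if_pos hodd]
        have hmem := (ustarF_mem hPsub hPcard hodd).1
        have hrho := childsF_rho hwf hmem
        obtain ⟨m, hm⟩ := ih (ustarF p r P v) (by omega)
        refine ⟨m + 1, ?_⟩
        rw [Function.iterate_succ_apply', hm]
        obtain ⟨hnB, hpu, hur⟩ := ustarF_not_isB hPsub hPcard hodd (f := f) (w := w) (ι := ι)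
        rw [parB, if_neg hnB]
        exact hpu
      · rw [if_neg hodd]
        exact ⟨0, rfl⟩
  exact key (Fintype.card V) v (by have := rho_lt_card hwf v; omega)

lemma parB_wf (hr : p r = r) (hwf : ∀ v, ∃ n, p^[n] v = r)
    (hPsub : ∀ v, P v ⊆ childsF p r v)
    (hPcard : ∀ v, (P v).card = 2 * ((childsF p r v).card / 2))
    (hPf : ∀ v, ∀ x ∈ P v, f v x ∈ P v ∧ f v (f v x) = x ∧ f v x ≠ x) :
    ∀ v, ∃ m, (parB p r P f w ι)^[m] v = r := by
  have key : ∀ n v, rho p r v ≤ n → ∃ m, (parB p r P f w ι)^[m] v = r := by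
    intro n
    induction n with
    | zero =>
      intro v hv
      have hvr : v = r := by
        by_contra hne
        have := rho_succ hwf hne
        omega
      exact ⟨0, hvr⟩
    | succ n ih =>
      intro v hv
      by_cases hvr : v = r
      · exact ⟨0, hvr⟩
      · by_cases hB : isBF p r P f w ι v
        · -- v is a B-child: parB v = alphaF (mate v)
          set a := f (p v) v with ha
          obtain ⟨hm, hpp, hnr, hff, hne⟩ := mate_facts hPsub hPf hB.1 hB.2.1
          obtain ⟨m₁, hm₁⟩ := alphaF_parB_reach (f := f) (w := w) (ι := ι) hwf hPsub hPcard a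
          have hnBa : ¬ isBF p r P f w ι a := mate_not_isB hPsub hPf hB
          have hstep : parB p r P f w ι a = p v := by
            rw [parB, if_neg hnBa, hpp]
          have hrhopv := rho_succ hwf hvr
          obtain ⟨m₂, hm₂⟩ := ih (p v) (by omega)
          refine ⟨m₂ + (1 + (m₁ + 1)), ?_⟩
          rw [Function.iterate_add_apply]
          have e1 : (parB p r P f w ι)^[1 + (m₁ + 1)] v = p v := by
            rw [Function.iterate_add_apply]
            have e2 : (parB p r P f w ι)^[m₁ + 1] v = a := by
              rw [Function.iterate_succ_apply]
              have e3 : parB p r P f w ι v = alphaF p r P a := by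
                rw [parB, if_pos hB]
              rw [e3, hm₁]
            rw [e2]
            simp only [Function.iterate_one]
            exact hstep
          rw [e1, hm₂]
        · have hstep : parB p r P f w ι v = p v := by rw [parB, if_neg hB]
          have hrhopv := rho_succ hwf hvr
          obtain ⟨m₂, hm₂⟩ := ih (p v) (by omega)
          exact ⟨m₂ + 1, by rw [Function.iterate_succ_apply, hstep, hm₂]⟩
  intro v
  exact key (rho p r v) v le_rfl

lemma parB_r (hr : p r = r) : parB p r P f w ι r = r := by
  rw [parB, if_neg (fun h => h.1 rfl)]
  exact hr

end ParBLemmas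

/-- Given any spanning tree `T` of a weighted graph satisfying the triangle inequality,
there is a spanning tree `T'` with `deg_{T'}(v) ≤ 1 + ⌈deg_T(v)/2⌉` for every `v`, whose
weight is at most `3/2` times that of `T`. -/
theorem stmt1 {V : Type*} [Fintype V] (hV : 2 ≤ Fintype.card V)
    (w : V → V → ℝ)
    (hsym : ∀ u v, w u v = w v u)
    (hnonneg : ∀ u v, 0 ≤ w u v)
    (hdiag : ∀ v, w v v = 0)
    (htri : ∀ u x v, w u v ≤ w u x + w x v)
    (T : SimpleGraph V) (hT : T.IsTree) :
    ∃ T' : SimpleGraph V, T'.IsTree ∧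
      (∀ v, degreeOf T' v ≤ 1 + ⌈(degreeOf T v : ℚ) / 2⌉₊) ∧
      weightOf T' w ≤ (3 / 2 : ℝ) * weightOf T w := by
  classical
  obtain ⟨r⟩ : Nonempty V := Fintype.card_pos_iff.1 (by omega)
  obtain ⟨par, hr, hwf, hadjT⟩ := tree_parent hT r
  have hTeq : T = pGraph par := by
    ext u v
    rw [hadjT u v]
    rfl
  have hpair : ∀ v : V, ∃ (Pv : Finset V) (fv : V → V), Pv ⊆ childsF par r v ∧
      (∀ x ∈ Pv, fv x ∈ Pv ∧ fv (fv x) = x ∧ fv x ≠ x) ∧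
      Pv.card = 2 * ((childsF par r v).card / 2) :=
    fun v => exists_pairing (childsF par r v)
  choose P f hPsub hPf hPcard using hpair
  set ι : V → ℕ := fun v => ((Fintype.equivFin V) v : ℕ) with hι_def
  have hι : Function.Injective ι := by
    intro a b hab
    exact (Fintype.equivFin V).injective (Fin.ext hab)
  set p' : V → V := parB par r P f w ι with hp'def
  have hr' : p' r = r := parB_r hr
  have hwf' : ∀ v, ∃ m, p'^[m] v = r := parB_wf hr hwf hPsub hPcard hPf
  have hceil : ∀ d : ℕ, ⌈(d : ℚ) / 2⌉₊ = (d + 1) / 2 := by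
    intro d
    apply le_antisymm
    · apply Nat.ceil_le.2
      rw [div_le_iff₀ (by norm_num : (0:ℚ) < 2)]
      have : (d : ℚ) ≤ ((d + 1) / 2 * 2 : ℕ) := by
        apply Nat.cast_le.2
        omega
      calc (d : ℚ) ≤ (((d + 1) / 2 * 2 : ℕ) : ℚ) := this
        _ = ((d+1)/2 : ℕ) * 2 := by push_cast; ring
    · have h1 : (d : ℚ) / 2 ≤ ⌈(d : ℚ) / 2⌉₊ := Nat.le_ceil _
      have h2 : (d : ℚ) ≤ (⌈(d : ℚ) / 2⌉₊ * 2 : ℕ) := by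
        push_cast
        linarith
      have h3 : d ≤ ⌈(d : ℚ) / 2⌉₊ * 2 := Nat.cast_le.1 h2
      omega
  refine ⟨pGraph p', pGraph_isTree hr' hwf', ?_, ?_⟩
  · -- degree bound
    intro v
    have hdegT : degreeOf T v = (childsF par r v).card + (if v = r then 0 else 1) := by
      rw [hTeq]
      exact pGraph_degreeOf hr hwf v
    have hdegT' : degreeOf (pGraph p') v
        = (childsF p' r v).card + (if v = r then 0 else 1) :=
      pGraph_degreeOf hr' hwf' v
    set k := (childsF par r v).card with hk
    -- the new children are contained in kept children plus at most one attachment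
    set keep := (childsF par r v).filter (fun u => ¬ isBF par r P f w ι u) with hkeep
    set att := Finset.univ.filter
      (fun b => isBF par r P f w ι b ∧ alphaF par r P (f (par b) b) = v) with hatt
    have hsub : childsF p' r v ⊆ keep ∪ att := by
      intro u hu
      simp only [childsF, Finset.mem_filter, Finset.mem_univ, true_and] at hu
      obtain ⟨hpu, hur⟩ := hu
      by_cases hB : isBF par r P f w ι u
      · apply Finset.mem_union_right
        rw [hatt]
        simp only [Finset.mem_filter, Finset.mem_univ, true_and]
        refine ⟨hB, ?_⟩
        rw [hp'def, parB, if_pos hB] at hpu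
        exact hpu
      · apply Finset.mem_union_left
        rw [hkeep]
        simp only [Finset.mem_filter]
        rw [hp'def, parB, if_neg hB] at hpu
        refine ⟨?_, hB⟩
        simp only [childsF, Finset.mem_filter, Finset.mem_univ, true_and]
        exact ⟨hpu, hur⟩
    -- card of keep
    have hBv : ∀ u, u ∈ (childsF par r v).filter (fun u => isBF par r P f w ι u) →
        u ∈ P v := by
      intro u hu
      simp only [Finset.mem_filter] at hu
      obtain ⟨hc, hB⟩ := hu
      simp only [childsF, Finset.mem_filter] at hc
      have := hB.2.1
      rwa [hc.2.1] at this
    set Bv := (childsF par r v).filter (fun u => isBF par r P f w ι u) with hBvdef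
    have hBvP : Bv ⊆ P v := hBv
    have hmate_mem : ∀ u ∈ Bv, f v u ∈ P v \ Bv := by
      intro u hu
      have huP := hBvP hu
      simp only [hBvdef, Finset.mem_filter] at hu
      obtain ⟨hc, hB⟩ := hu
      simp only [childsF, Finset.mem_filter, Finset.mem_univ, true_and] at hc
      have hpar_u : par u = v := hc.1
      obtain ⟨hm, hpp, hnr, hff, hne⟩ := mate_facts hPsub hPf hB.1 hB.2.1
      rw [hpar_u] at hm hpp hnr hff
      rw [Finset.mem_sdiff]
      constructor
      · exact hm
      · rw [hBvdef]
        simp only [Finset.mem_filter, not_and]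
        intro hcm
        have hnB := mate_not_isB hPsub hPf hB
        rw [hpar_u] at hnB
        exact fun hBm => hnB hBm
    have hcardBv : 2 * Bv.card = (P v).card := by
      have hAv : P v \ Bv ⊆ P v := Finset.sdiff_subset
      have hbij : Bv.card = (P v \ Bv).card := by
        apply Finset.card_bij (fun u _ => f v u) hmate_mem
        · intro a ha b hb hab
          have ha' := hBvP ha
          have hb' := hBvP hb
          have hfa := (hPf v a ha').2.1
          rw [hab] at hfa
          rw [(hPf v b hb').2.1] at hfa
          exact hfa.symm
        · intro a ha
          rw [Finset.mem_sdiff] at ha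
          obtain ⟨haP, haB⟩ := ha
          have hac := hPsub v haP
          simp only [childsF, Finset.mem_filter, Finset.mem_univ, true_and] at hac
          refine ⟨f v a, ?_, ?_⟩
          · rw [hBvdef]
            simp only [Finset.mem_filter]
            have h1 : a ∈ P (par a) := by rw [hac.1]; exact haP
            rcases isB_or_mate_isB (f := f) (w := w) (ι := ι) hPsub hPf hι hac.2 h1 with hB | hB
            · exfalso
              apply haB
              rw [hBvdef]
              simp only [Finset.mem_filter]
              refine ⟨?_, hB⟩
              simp only [childsF, Finset.mem_filter, Finset.mem_univ, true_and]
              exact hac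
            · rw [hac.1] at hB
              constructor
              · have := hPsub v ((hPf v a haP).1)
                exact this
              · exact hB
          · exact (hPf v a haP).2.1
      have : Bv.card + (P v \ Bv).card = (P v).card := by
        rw [Finset.card_sdiff_of_subset hBvP]
        have := Finset.card_le_card hBvP
        omega
      omega
    have hkc : Bv.card + keep.card = k := by
      rw [hBvdef, hkeep, hk]
      exact Finset.card_filter_add_card_filter_not _
    -- attachment set analysis
    have hbeta_att : ∀ b ∈ att, f (par b) b = betaF par r P v := by
      intro b hb
      rw [hatt] at hb
      simp only [Finset.mem_filter, Finset.mem_univ, true_and] at hb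
      obtain ⟨hB, hal⟩ := hb
      obtain ⟨hm, hpp, hnr, hff, hne⟩ := mate_facts hPsub hPf hB.1 hB.2.1
      have h1 : betaF par r P (alphaF par r P (f (par b) b)) = betaF par r P (f (par b) b) :=
        betaF_alphaF hwf hPsub hPcard _
      rw [hal] at h1
      have h2 : betaF par r P (f (par b) b) = f (par b) b := by
        rw [betaF_eq hwf]
        rw [if_neg]
        rintro ⟨h3, h4⟩
        rw [hpp] at h4
        exact h4 hm
      rw [h2] at h1
      exact h1.symm
    have hatt1 : att.card ≤ 1 := by
      apply Finset.card_le_one.2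
      intro a ha b hb
      have h1 := hbeta_att a ha
      have h2 := hbeta_att b hb
      rw [hatt] at ha hb
      simp only [Finset.mem_filter, Finset.mem_univ, true_and] at ha hb
      obtain ⟨hma, hppa, -, hffa, -⟩ := mate_facts hPsub hPf ha.1.1 ha.1.2.1
      obtain ⟨hmb, hppb, -, hffb, -⟩ := mate_facts hPsub hPf hb.1.1 hb.1.2.1
      have h3 : f (par a) a = f (par b) b := by rw [h1, h2]
      -- recover a and b from their mates
      have h4 : par (f (par a) a) = par a := hppa
      have h5 : par (f (par b) b) = par b := hppb
      have h6 : par a = par b := by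
        rw [← h4, ← h5, h3]
      rw [← hffa, ← hffb, h3, h6]
    have hatt_even : att.Nonempty → k % 2 = 0 := by
      rintro ⟨b, hb⟩
      rw [hatt] at hb
      simp only [Finset.mem_filter, Finset.mem_univ, true_and] at hb
      obtain ⟨hB, hal⟩ := hb
      have := alphaF_not_odd hwf hPsub hPcard (f (par b) b)
      rw [hal] at this
      rw [Nat.odd_iff] at this
      rw [hk]
      omega
    have hA : att.card = 0 ∨ (att.card ≤ 1 ∧ k % 2 = 0) := by
      by_cases h : att.Nonempty
      · exact Or.inr ⟨hatt1, hatt_even h⟩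
      · rw [Finset.not_nonempty_iff_eq_empty] at h
        rw [h]
        exact Or.inl rfl
    have hcard' : (childsF p' r v).card ≤ keep.card + att.card :=
      le_trans (Finset.card_le_card hsub) (Finset.card_union_le _ _)
    rw [hdegT', hdegT, hceil]
    have hPv2 : (P v).card = 2 * (k / 2) := hPcard v
    have hBv2 : 2 * Bv.card = 2 * (k / 2) := by rw [hcardBv]; exact hPv2
    by_cases hvr : v = r
    · rw [if_pos hvr]
      omega
    · rw [if_neg hvr]
      omega
  · -- weight bound
    have hwT : weightOf T w = ∑ u ∈ Finset.univ.filter (fun u => u ≠ r), w u (par u) := by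
      rw [hTeq]
      exact pGraph_weightOf w hsym hr hwf
    have hwT' : weightOf (pGraph p') w
        = ∑ u ∈ Finset.univ.filter (fun u => u ≠ r), w u (p' u) :=
      pGraph_weightOf w hsym hr' hwf'
    set F := Finset.univ.filter (fun u : V => u ≠ r) with hF
    set S := ∑ u ∈ F, w u (par u) with hS
    -- pointwise bound
    have hpoint : ∀ u ∈ F, w u (p' u) ≤ w u (par u) +
        (if isBF par r P f w ι u then costF par r P w (f (par u) u) else 0) := by
      intro u hu
      by_cases hB : isBF par r P f w ι u
      · rw [if_pos hB]
        set a := f (par u) u with ha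
        obtain ⟨hm, hpp, hnr, hff, hne⟩ := mate_facts hPsub hPf hB.1 hB.2.1
        have hch := chain_triangle hwf hPsub hPcard w hsym htri a u
        rw [hpp] at hch
        have htr : w u a ≤ w u (par u) + w (par u) a := htri u (par u) a
        have hpu : p' u = alphaF par r P a := by
          rw [hp'def, parB, if_pos hB]
        rw [hpu]
        linarith
      · rw [if_neg hB]
        have hpu : p' u = par u := by rw [hp'def, parB, if_neg hB]
        rw [hpu]
        linarith [le_refl (w u (par u))]
    have hsum1 : ∑ u ∈ F, w u (p' u) ≤ S + ∑ u ∈ F,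
        (if isBF par r P f w ι u then costF par r P w (f (par u) u) else 0) := by
      rw [hS, ← Finset.sum_add_distrib]
      exact Finset.sum_le_sum hpoint
    -- the B vertices
    set Ball := Finset.univ.filter (fun u : V => isBF par r P f w ι u) with hBall
    have hsum2 : ∑ u ∈ F,
        (if isBF par r P f w ι u then costF par r P w (f (par u) u) else 0)
        = ∑ u ∈ Ball, costF par r P w (f (par u) u) := by
      rw [← Finset.sum_filter]
      congr 1
      rw [hBall, hF]
      ext u
      simp only [Finset.mem_filter, Finset.mem_univ, true_and]
      constructor
      · rintro ⟨h1, h2⟩; exact h2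
      · intro h; exact ⟨h.1, h⟩
    set Pall := Finset.univ.filter (fun z : V => z ≠ r ∧ z ∈ P (par z)) with hPall
    have hBallPall : Ball ⊆ Pall := by
      intro u hu
      rw [hBall] at hu
      rw [hPall]
      simp only [Finset.mem_filter, Finset.mem_univ, true_and] at hu ⊢
      exact ⟨hu.1, hu.2.1⟩
    -- sum over the A side equals the mate-sum over B
    have hsum3 : ∑ u ∈ Ball, costF par r P w (f (par u) u)
        = ∑ z ∈ Pall \ Ball, costF par r P w z := by
      apply Finset.sum_bij (fun u _ => f (par u) u)
      · intro u hu
        rw [hBall] at hu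
        simp only [Finset.mem_filter, Finset.mem_univ, true_and] at hu
        obtain ⟨hm, hpp, hnr, hff, hne⟩ := mate_facts hPsub hPf hu.1 hu.2.1
        rw [Finset.mem_sdiff, hPall, hBall]
        simp only [Finset.mem_filter, Finset.mem_univ, true_and]
        refine ⟨⟨hnr, by rw [hpp]; exact hm⟩, ?_⟩
        exact mate_not_isB hPsub hPf hu
      · intro a ha b hb hab
        rw [hBall] at ha hb
        simp only [Finset.mem_filter, Finset.mem_univ, true_and] at ha hb
        obtain ⟨-, hppa, -, hffa, -⟩ := mate_facts hPsub hPf ha.1 ha.2.1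
        obtain ⟨-, hppb, -, hffb, -⟩ := mate_facts hPsub hPf hb.1 hb.2.1
        have h6 : par a = par b := by rw [← hppa, ← hppb, hab]
        rw [← hffa, ← hffb, hab, h6]
      · intro z hz
        rw [Finset.mem_sdiff, hPall, hBall] at hz
        simp only [Finset.mem_filter, Finset.mem_univ, true_and] at hz
        obtain ⟨⟨hzr, hzP⟩, hznB⟩ := hz
        rcases isB_or_mate_isB (f := f) (w := w) (ι := ι) hPsub hPf hι hzr hzP with hB | hB
        · exact absurd hB hznB
        · obtain ⟨hm, hpp, hnr, hff, hne⟩ := mate_facts hPsub hPf hzr hzP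
          refine ⟨f (par z) z, ?_, ?_⟩
          · rw [hBall]
            simp only [Finset.mem_filter, Finset.mem_univ, true_and]
            exact hB
          · rw [hpp, hff]
      · intro u hu
        rfl
    -- mate has smaller cost
    have hsum4 : ∑ u ∈ Ball, costF par r P w (f (par u) u) ≤ ∑ u ∈ Ball, costF par r P w u := by
      apply Finset.sum_le_sum
      intro u hu
      rw [hBall] at hu
      simp only [Finset.mem_filter, Finset.mem_univ, true_and] at hu
      rcases hu.2.2 with h | h
      · exact le_of_lt h
      · exact le_of_eq h.1
    have hsplit : ∑ z ∈ Pall \ Ball, costF par r P w z + ∑ u ∈ Ball, costF par r P w u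
        = ∑ z ∈ Pall, costF par r P w z := Finset.sum_sdiff hBallPall
    -- Dsets are disjoint across Pall
    have hbetaPall : ∀ z ∈ Pall, betaF par r P z = z := by
      intro z hz
      rw [hPall] at hz
      simp only [Finset.mem_filter, Finset.mem_univ, true_and] at hz
      rw [betaF_eq hwf]
      rw [if_neg]
      rintro ⟨h1, h2⟩
      exact h2 hz.2
    have hdisj : (↑Pall : Set V).PairwiseDisjoint (DsetF par r P) := by
      intro z1 hz1 z2 hz2 hne
      rw [Finset.mem_coe] at hz1 hz2
      simp only [Function.onFun]
      apply Finset.disjoint_left.2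
      intro x hx1 hx2
      have h1 := DsetF_beta hwf hPsub hPcard hx1
      have h2 := DsetF_beta hwf hPsub hPcard hx2
      apply hne
      rw [← hbetaPall z1 hz1, ← hbetaPall z2 hz2, ← h1, ← h2]
    have hsum5 : ∑ z ∈ Pall, costF par r P w z
        = ∑ x ∈ Pall.biUnion (DsetF par r P), w (par x) x := by
      rw [Finset.sum_biUnion hdisj]
      rfl
    have hsub2 : Pall.biUnion (DsetF par r P) ⊆ F := by
      intro x hx
      rw [Finset.mem_biUnion] at hx
      obtain ⟨z, hz, hxz⟩ := hx
      rw [hPall] at hz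
      simp only [Finset.mem_filter, Finset.mem_univ, true_and] at hz
      have h1 := DsetF_rho hwf hPsub hPcard hxz
      have h2 := rho_succ hwf hz.1
      rw [hF]
      simp only [Finset.mem_filter, Finset.mem_univ, true_and]
      intro hxr
      rw [hxr, rho_root] at h1
      omega
    have hsum6 : ∑ x ∈ Pall.biUnion (DsetF par r P), w (par x) x ≤ ∑ x ∈ F, w (par x) x := by
      apply Finset.sum_le_sum_of_subset_of_nonneg hsub2
      intro x _ _
      exact hnonneg _ _
    have hSsym : ∑ x ∈ F, w (par x) x = S := by
      rw [hS]
      exact Finset.sum_congr rfl (fun x _ => hsym (par x) x)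
    have hfinal : ∑ u ∈ Ball, costF par r P w (f (par u) u) ≤ (1/2) * S := by
      have h1 : (2:ℝ) * ∑ u ∈ Ball, costF par r P w (f (par u) u)
          ≤ ∑ z ∈ Pall, costF par r P w z := by
        rw [← hsplit]
        rw [← hsum3]
        linarith [hsum4]
      have h2 : ∑ z ∈ Pall, costF par r P w z ≤ S := by
        rw [hsum5]
        rw [← hSsym]
        exact hsum6
      linarith
    rw [hwT', hwT]
    calc ∑ u ∈ F, w u (p' u) ≤ S + ∑ u ∈ F,
        (if isBF par r P f w ι u then costF par r P w (f (par u) u) else 0) := hsum1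
      _ = S + ∑ u ∈ Ball, costF par r P w (f (par u) u) := by rw [hsum2]
      _ ≤ S + (1/2) * S := by linarith
      _ = (3/2 : ℝ) * S := by ring
end

section
/- Let V be a finite set with at least 2 elements, w a symmetric nonnegative weight function on V × V satisfying the triangle inequality and w(v,v) = 0, T a spanning tree on V, and d : V → ℕ degree bounds with d(v) ≥ 1 for every v. If f is a feasible and legal integer flow for T and d, then there exists a spanning tree T' on V such that deg_{T'}(v) ≤ d(v) for every v ∈ V and w(T') ≤ w(T) + cost(f). -/
/-!
Induction on the total positive flow `∑ f⁺`. If `T` already meets the degree bounds, take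
`T' = T`. Otherwise some `v` has `deg_T v > d v ≥ 1`, so its surplus is positive and some `u`
sends flow into `v`; as `deg_T v ≥ 2`, `v` has a neighbour `x` off the tree path from `v` to `u`.
Exchanging the edge `vx` for `ux` gives a spanning tree in which `u` gains and `v` loses one
degree, at extra weight `w(u,x) - w(v,x) ≤ w(u,v)`. Cancelling one unit of flow on `(u,v)` shifts
the surpluses in the same way, so feasibility is kept, and lowers the cost by exactly `w(u,v)`.
-/

open scoped Classical

/-- A flow is skew-symmetric: `f u v = - f v u`. -/
def IsSkew {V : Type*} (f : V → V → ℤ) : Prop := ∀ u v, f u v = - f v u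

/-- The surplus of `v` under `f`: the incoming positive flow minus the outgoing positive flow. -/
def surplus {V : Type*} [Fintype V] (f : V → V → ℤ) (v : V) : ℤ :=
  (∑ u : V, if 0 < f u v then f u v else 0) - ∑ u : V, if 0 < f v u then f v u else 0

/-- A flow is feasible for tree `T` and degree bounds `d` if the surplus of every vertex is
at least its deficit `deg_T v - d v`. -/
def FeasibleFlow {V : Type*} [Fintype V] (T : SimpleGraph V) (d : V → ℕ)
    (f : V → V → ℤ) : Prop :=
  ∀ v, (degreeOf T v : ℤ) - (d v : ℤ) ≤ surplus f v

/-- A flow is legal for tree `T` if the surplus of every vertex is at most `deg_T v - 1`. -/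
def LegalFlow {V : Type*} [Fintype V] (T : SimpleGraph V) (f : V → V → ℤ) : Prop :=
  ∀ v, surplus f v ≤ (degreeOf T v : ℤ) - 1

/-- The cost of a (skew-symmetric) flow: for each unordered pair, the positive flow between
them times the weight; summed over ordered pairs, each unordered pair contributes once, via
its positive direction. -/
noncomputable def flowCost {V : Type*} [Fintype V] (f : V → V → ℤ) (w : V → V → ℝ) : ℝ :=
  ∑ u : V, ∑ v : V, if 0 < f u v then (f u v : ℝ) * w u v else 0

section

open Finset SimpleGraph

variable {V : Type*}

namespace SimpleGraph

variable {G H : SimpleGraph V} {u v x : V}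

lemma deleteEdges_sup_edge (h : G.Adj v x) : G.deleteEdges {s(v, x)} ⊔ edge v x = G :=
  sdiff_sup_cancel ((edge_le_iff G).2 (Or.inr h))

lemma Reachable.exists_adj_reachable_deleteEdges (h : G.Reachable v u)
    (hv : 1 < (G.neighborSet v).ncard) :
    ∃ x, G.Adj v x ∧ (G.deleteEdges {s(v, x)}).Reachable v u := by
  obtain ⟨p, hp⟩ := h.exists_isPath
  obtain ⟨x, hx, hxp⟩ := Set.exists_ne_of_one_lt_ncard hv p.snd
  exact ⟨x, hx, reachable_deleteEdges_iff_exists_walk.2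
    ⟨p, fun hmem => hxp (hp.eq_snd_of_mem_edges hmem)⟩⟩

lemma IsTree.sup_edge_of_reachable (hT : (H ⊔ edge v x).IsTree) (hvx : ¬ H.Reachable v x)
    (hvu : H.Reachable v u) : (H ⊔ edge u x).IsTree := by
  have hux : ¬ H.Reachable u x := fun h => hvx (hvu.trans h)
  have hreach_vx : (H ⊔ edge u x).Reachable v x :=
    (hvu.mono le_sup_left).trans (Adj.reachable (Or.inr ((edge_adj ..).2
      ⟨Or.inl ⟨rfl, rfl⟩, fun h => hux (h ▸ Reachable.rfl)⟩)))
  have hreach : (H ⊔ edge v x).Reachable ≤ (H ⊔ edge u x).Reachable := by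
    rw [reachable_eq_reflTransGen]
    refine Relation.reflTransGen_le_of_equivalence_of_le (reachable_is_equivalence _) ?_
    rintro a b (hab | hab)
    · exact (Adj.reachable hab).mono le_sup_left
    · obtain ⟨⟨rfl, rfl⟩ | ⟨rfl, rfl⟩, -⟩ := (edge_adj ..).1 hab
      exacts [hreach_vx, hreach_vx.symm]
  have := hT.connected.nonempty
  exact ⟨⟨fun a b => hreach a b (hT.connected.preconnected a b)⟩,
    (hT.isAcyclic.anti le_sup_left).sup_edge_of_not_reachable hux⟩

end SimpleGraph

section GraphSums

variable [Fintype V] {G H : SimpleGraph V} {a b : V}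

lemma degreeOf_sup (h : Disjoint G H) (y : V) :
    degreeOf (G ⊔ H) y = degreeOf G y + degreeOf H y :=
  Set.ncard_union_eq (Set.disjoint_left.2 fun _ hG hH => h.le_bot ⟨hG, hH⟩)

lemma degreeOf_edge (hab : a ≠ b) (y : V) :
    degreeOf (edge a b) y = (if y = a then 1 else 0) + (if y = b then 1 else 0) := by
  have hN : {z | (edge a b).Adj y z} =
      (if y = a then {b} else ∅) ∪ (if y = b then {a} else ∅) := by
    ext z
    simp only [Set.mem_ofPred_eq, edge_adj, Set.mem_union]
    split_ifs <;> grind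
  by_cases hya : y = a <;> by_cases hyb : y = b <;> simp_all [degreeOf]

variable (w : V → V → ℝ)

lemma weightOf_sup (h : Disjoint G H) : weightOf (G ⊔ H) w = weightOf G w + weightOf H w := by
  simp only [weightOf, ← add_div, ← sum_add_distrib]
  congr 1
  refine sum_congr rfl fun y _ => sum_congr rfl fun z _ => ?_
  have : ¬ (G.Adj y z ∧ H.Adj y z) := fun hGH => h.le_bot hGH
  by_cases hG : G.Adj y z <;> by_cases hH : H.Adj y z <;> simp_all

lemma weightOf_edge (hsym : ∀ u v, w u v = w v u) (hab : a ≠ b) :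
    weightOf (edge a b) w = w a b := by
  rw [weightOf, div_eq_iff two_ne_zero]
  calc _ = ∑ y, ∑ z, ((if y = a ∧ z = b then w y z else 0) +
        (if y = b ∧ z = a then w y z else 0)) :=
        sum_congr rfl fun y _ => sum_congr rfl fun z _ => by split_ifs <;> simp_all [edge_adj]
    _ = w a b * 2 := by simp [sum_add_distrib, ite_and, hsym b a]; ring

end GraphSums

lemma SimpleGraph.IsTree.exists_exchange [Fintype V] {T : SimpleGraph V} (hT : T.IsTree)
    (w : V → V → ℝ) (hsym : ∀ u v, w u v = w v u) (htri : ∀ u x v, w u v ≤ w u x + w x v)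
    (u v : V) (hv : 2 ≤ degreeOf T v) :
    ∃ T₂ : SimpleGraph V, T₂.IsTree ∧
      (∀ y, (degreeOf T₂ y : ℤ) =
        degreeOf T y + (if y = u then 1 else 0) - (if y = v then 1 else 0)) ∧
      weightOf T₂ w ≤ weightOf T w + w u v := by
  obtain ⟨x, hvx, hvu⟩ := (hT.connected.preconnected v u).exists_adj_reachable_deleteEdges hv
  have hnvx := isBridge_iff.1 (isAcyclic_iff_forall_adj_isBridge.1 hT.isAcyclic hvx)
  obtain ⟨H, hHdef⟩ : ∃ H, H = T.deleteEdges {s(v, x)} := ⟨_, rfl⟩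
  rw [← hHdef] at hvu hnvx
  obtain rfl : H ⊔ edge v x = T := hHdef ▸ deleteEdges_sup_edge hvx
  have hnux : ¬ H.Reachable u x := fun h => hnvx (hvu.trans h)
  have hux : u ≠ x := fun h => hnux (h ▸ Reachable.rfl)
  have hdisj_vx : Disjoint H (edge v x) := (disjoint_edge H).2 fun h => hnvx h.reachable
  have hdisj_ux : Disjoint H (edge u x) := (disjoint_edge H).2 fun h => hnux h.reachable
  refine ⟨H ⊔ edge u x, hT.sup_edge_of_reachable hnvx hvu, fun y => ?_, ?_⟩
  · rw [degreeOf_sup hdisj_vx, degreeOf_sup hdisj_ux, degreeOf_edge hux, degreeOf_edge hvx.ne]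
    push_cast
    ring
  · rw [weightOf_sup w hdisj_vx, weightOf_sup w hdisj_ux, weightOf_edge w hsym hux,
      weightOf_edge w hsym hvx.ne]
    linarith [htri u v x]

section Flows

variable [Fintype V] {f : V → V → ℤ} {u v : V}

def flowValue (f : V → V → ℤ) : ℕ := ∑ a, ∑ b, (f a b).toNat

noncomputable def decrementAt (f : V → V → ℤ) (u v : V) : V → V → ℤ :=
  fun a b => if a = u ∧ b = v then f a b - 1 else f a b

lemma sum_sum_comp_decrementAt {M : Type*} [AddCommMonoid M] (φ : V → V → ℤ → M)
    (f : V → V → ℤ) (u v : V) :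
    ∑ a, ∑ b, φ a b (decrementAt f u v a b) + φ u v (f u v) =
      ∑ a, ∑ b, φ a b (f a b) + φ u v (f u v - 1) := by
  simp only [← Fintype.sum_prod_type']
  rw [Fintype.sum_eq_add_sum_compl (u, v), Fintype.sum_eq_add_sum_compl (u, v)
    (fun p => φ p.1 p.2 (f p.1 p.2))]
  have hoff : ∀ p ∈ ({(u, v)}ᶜ : Finset (V × V)),
      φ p.1 p.2 (decrementAt f u v p.1 p.2) = φ p.1 p.2 (f p.1 p.2) := fun p hp => by
    rw [decrementAt, if_neg (by simpa [Prod.ext_iff] using hp)]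
  rw [sum_congr rfl hoff, decrementAt, if_pos ⟨rfl, rfl⟩]
  dsimp only
  abel

lemma surplus_eq_sum_sum (f : V → V → ℤ) (y : V) :
    surplus f y = ∑ a, ∑ b, (if 0 < f a b then f a b else 0) *
      ((if y = b then 1 else 0) - (if y = a then 1 else 0)) := by
  simp only [surplus, mul_sub, mul_ite, mul_one, mul_zero, sum_sub_distrib, sum_ite_eq,
    mem_univ, if_true]
  rw [sum_comm (s := univ) (t := univ) (f := fun a b => if y = a then _ else 0)]
  simp only [sum_ite_eq, mem_univ, if_true]

lemma surplus_decrementAt (hf : 0 < f u v) (y : V) :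
    surplus (decrementAt f u v) y =
      surplus f y + (if y = u then 1 else 0) - (if y = v then 1 else 0) := by
  have key := sum_sum_comp_decrementAt (fun a b n => (if 0 < n then n else 0) *
    ((if y = b then 1 else 0) - (if y = a then 1 else 0))) f u v
  have hpos : (if 0 < f u v - 1 then f u v - 1 else 0) = f u v - 1 := by split_ifs <;> omega
  simp only [← surplus_eq_sum_sum, if_pos hf, hpos] at key
  linear_combination key

lemma flowCost_decrementAt (w : V → V → ℝ) (hf : 0 < f u v) :
    flowCost (decrementAt f u v) w = flowCost f w - w u v := by
  have key := sum_sum_comp_decrementAt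
    (fun a b n => if 0 < n then (n : ℝ) * w a b else 0) f u v
  have hpos : (if 0 < f u v - 1 then ((f u v - 1 : ℤ) : ℝ) * w u v else 0) =
      ((f u v : ℝ) - 1) * w u v := by
    split_ifs with h
    · push_cast; ring
    · rw [show f u v = 1 by omega]; simp
  simp only [if_pos hf, hpos] at key
  rw [flowCost, flowCost]
  linear_combination key

lemma flowValue_decrementAt_lt (hf : 0 < f u v) :
    flowValue (decrementAt f u v) < flowValue f := by
  have key := sum_sum_comp_decrementAt (fun _ _ n => n.toNat) f u v
  unfold flowValue
  omega

lemma exists_pos_of_surplus_pos (h : 0 < surplus f v) : ∃ u, 0 < f u v := by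
  by_contra! hf
  have hin : ∑ u, (if 0 < f u v then f u v else 0) = 0 :=
    sum_eq_zero fun u _ => if_neg (hf u).not_gt
  have hout : 0 ≤ ∑ u, (if 0 < f v u then f v u else 0) :=
    sum_nonneg fun u _ => by split_ifs <;> omega
  rw [surplus, hin] at h
  omega

lemma flowCost_nonneg (w : V → V → ℝ) (hw : ∀ u v, 0 ≤ w u v) (f : V → V → ℤ) :
    0 ≤ flowCost f w :=
  sum_nonneg fun a _ => sum_nonneg fun b _ => by
    split_ifs with h
    · exact mul_nonneg (by exact_mod_cast h.le) (hw a b)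
    · rfl

end Flows

lemma FeasibleFlow.exists_exchange [Fintype V] {T : SimpleGraph V} {d : V → ℕ} {f : V → V → ℤ}
    (hfeas : FeasibleFlow T d f) (hT : T.IsTree) (w : V → V → ℝ) (hsym : ∀ u v, w u v = w v u)
    (htri : ∀ u x v, w u v ≤ w u x + w x v) {v : V} (hdv : 1 ≤ d v)
    (hv : d v < degreeOf T v) :
    ∃ (T₂ : SimpleGraph V) (f₂ : V → V → ℤ), T₂.IsTree ∧ FeasibleFlow T₂ d f₂ ∧
      flowValue f₂ < flowValue f ∧
      weightOf T₂ w + flowCost f₂ w ≤ weightOf T w + flowCost f w := by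
  obtain ⟨u, hu⟩ := exists_pos_of_surplus_pos (by linarith [hfeas v] : 0 < surplus f v)
  obtain ⟨T₂, hT₂, hdeg, hw⟩ := hT.exists_exchange w hsym htri u v (by omega)
  refine ⟨T₂, decrementAt f u v, hT₂, fun y => ?_, flowValue_decrementAt_lt hu, ?_⟩
  · rw [hdeg y, surplus_decrementAt hu]
    linarith [hfeas y]
  · rw [flowCost_decrementAt w hu]
    linarith

end

theorem stmt2_general {V : Type*} [Fintype V]
    (w : V → V → ℝ)
    (hsym : ∀ u v, w u v = w v u)
    (hnonneg : ∀ u v, 0 ≤ w u v)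
    (htri : ∀ u x v, w u v ≤ w u x + w x v)
    (T : SimpleGraph V) (hT : T.IsTree)
    (d : V → ℕ) (hd : ∀ v, 1 ≤ d v)
    (f : V → V → ℤ)
    (hfeas : FeasibleFlow T d f) :
    ∃ T' : SimpleGraph V, T'.IsTree ∧ (∀ v, degreeOf T' v ≤ d v) ∧
      weightOf T' w ≤ weightOf T w + flowCost f w := by
  induction hn : flowValue f using Nat.strong_induction_on generalizing T f with
  | _ n ih =>
    by_cases hdeg : ∀ v, degreeOf T v ≤ d v
    · exact ⟨T, hT, hdeg, le_add_of_nonneg_right (flowCost_nonneg w hnonneg f)⟩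
    obtain ⟨v, hv⟩ := not_forall.1 hdeg
    obtain ⟨T₂, f₂, hT₂, hfeas₂, hlt, hle⟩ :=
      hfeas.exists_exchange hT w hsym htri (hd v) (not_le.1 hv)
    obtain ⟨T', hT', hdeg', hw'⟩ := ih _ (hn ▸ hlt) T₂ hT₂ f₂ hfeas₂ rfl
    exact ⟨T', hT', hdeg', by linarith⟩

/-- If `f` is a feasible and legal integer flow for the spanning tree `T` and degree
bounds `d` (with `d v ≥ 1`), then there is a spanning tree `T'` meeting the degree bounds
with `w(T') ≤ w(T) + cost(f)`. -/
theorem stmt2 {V : Type*} [Fintype V] (hV : 2 ≤ Fintype.card V)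
    (w : V → V → ℝ)
    (hsym : ∀ u v, w u v = w v u)
    (hnonneg : ∀ u v, 0 ≤ w u v)
    (hdiag : ∀ v, w v v = 0)
    (htri : ∀ u x v, w u v ≤ w u x + w x v)
    (T : SimpleGraph V) (hT : T.IsTree)
    (d : V → ℕ) (hd : ∀ v, 1 ≤ d v)
    (f : V → V → ℤ) (hskew : IsSkew f) (hdiagf : ∀ v, f v v = 0)
    (hfeas : FeasibleFlow T d f) (hleg : LegalFlow T f) :
    ∃ T' : SimpleGraph V, T'.IsTree ∧ (∀ v, degreeOf T' v ≤ d v) ∧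
      weightOf T' w ≤ weightOf T w + flowCost f w :=
  stmt2_general w hsym hnonneg htri T hT d hd f hfeas
end

section
/- Let T be a tree on a finite vertex set V (with at least 2 elements) with positive edge weights, and let w(u,v) = d_T(u,v) be the induced tree metric on V × V. Let d : V → ℕ with d(v) ≥ 1 for every v, and let T* be any spanning tree on V such that deg_{T*}(v) ≤ d(v) for every v ∈ V. Then there exists a feasible and legal integer flow f for T and d whose cost is at most w(T*) − w(T), where weights of spanning trees are computed using the tree metric w = d_T. -/
open scoped Classical

/-! Induction on the number of edges of `T*` outside `T`. For an edge `ab` of `T*` not in `T`,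
the `T`-path from `a` to `b` crosses the cut of `T* - ab` at some edge `xy` of `T`; exchanging
`ab` for `xy` gives a spanning tree closer to `T`, and one unit routed along the `T`-paths from
`a` to `x` and from `b` to `y` restores the surplus at `a, b, x, y`. These paths cost
`d_T(a, b) - d_T(x, y)`, exactly the weight lost in the exchange. The resulting flow has
surplus `deg_T - deg_{T*}`, which lies between `deg_T - d` and `deg_T - 1`. -/

section Flows

variable {V : Type*}

namespace IsSkew

variable {f g : V → V → ℤ}

lemma add (hf : IsSkew f) (hg : IsSkew g) : IsSkew (f + g) := fun u v => by
  simp only [Pi.add_apply, hf u v, hg u v, neg_add]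

lemma apply_self (hf : IsSkew f) (v : V) : f v v = 0 := by
  linarith [hf v v]

lemma surplus_eq_sum [Fintype V] (hf : IsSkew f) (v : V) : surplus f v = ∑ u, f u v := by
  rw [surplus, ← Finset.sum_sub_distrib]
  refine Finset.sum_congr rfl fun u _ => ?_
  rw [hf v u]
  split_ifs <;> omega

end IsSkew

lemma isSkew_zero : IsSkew (0 : V → V → ℤ) := fun _ _ => by simp

noncomputable def unitFlow (x y : V) : V → V → ℤ := fun u v =>
  (if u = x ∧ v = y then 1 else 0) - (if u = y ∧ v = x then 1 else 0)

lemma isSkew_unitFlow (x y : V) : IsSkew (unitFlow x y) := fun u v => by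
  simp only [unitFlow]
  split_ifs <;> grind

lemma sum_unitFlow [Fintype V] (x y z : V) :
    ∑ u, unitFlow x y u z = (if z = y then 1 else 0) - (if z = x then 1 else 0) := by
  simp only [unitFlow, Finset.sum_sub_distrib, ite_and, Finset.sum_ite_eq', Finset.mem_univ,
    if_true]

noncomputable def walkFlow {G : SimpleGraph V} : ∀ {a b : V}, G.Walk a b → V → V → ℤ
  | _, _, .nil => 0
  | a, _, .cons (v := c) _ p => unitFlow a c + walkFlow p

variable {G : SimpleGraph V}

lemma isSkew_walkFlow {a b : V} (p : G.Walk a b) : IsSkew (walkFlow p) := by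
  induction p with
  | nil => exact isSkew_zero
  | cons _ p ih => exact (isSkew_unitFlow _ _).add ih

lemma sum_walkFlow [Fintype V] {a b : V} (p : G.Walk a b) (z : V) :
    ∑ u, walkFlow p u z = (if z = b then 1 else 0) - (if z = a then 1 else 0) := by
  induction p with
  | nil => simp [walkFlow]
  | cons _ p ih =>
    simp only [walkFlow, Pi.add_apply, Finset.sum_add_distrib, ih, sum_unitFlow]
    ring

lemma IsSkew.surplus_add_walkFlow [Fintype V] {f : V → V → ℤ} (hf : IsSkew f) {a b : V}
    (p : G.Walk a b) (v : V) :
    surplus (f + walkFlow p) v =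
      surplus f v + (if v = b then 1 else 0) - (if v = a then 1 else 0) := by
  rw [(hf.add (isSkew_walkFlow p)).surplus_eq_sum, hf.surplus_eq_sum]
  simp only [Pi.add_apply, Finset.sum_add_distrib, sum_walkFlow]
  ring

end Flows

section Cost

variable {V : Type*} [Fintype V] {w : V → V → ℝ}

lemma flowCost_add_le (hw : ∀ u v, 0 ≤ w u v) (f g : V → V → ℤ) :
    flowCost (f + g) w ≤ flowCost f w + flowCost g w := by
  simp only [flowCost, ← Finset.sum_add_distrib]
  gcongr with u _ v _
  have := hw u v
  simp only [Pi.add_apply, ← Int.cast_pos (R := ℝ), Int.cast_add]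
  split_ifs <;> nlinarith

lemma flowCost_unitFlow_le (hw : ∀ u v, 0 ≤ w u v) (x y : V) :
    flowCost (unitFlow x y) w ≤ w x y := by
  have hle : ∀ u v, (if 0 < unitFlow x y u v then (unitFlow x y u v : ℝ) * w u v else 0) ≤
      if u = x ∧ v = y then w u v else 0 := fun u v => by
    have := hw u v
    simp only [unitFlow]
    split_ifs <;> norm_num [this] at *
  calc flowCost (unitFlow x y) w
      ≤ ∑ u, ∑ v, if u = x ∧ v = y then w u v else 0 := by
        unfold flowCost; gcongr with u _ v _; exact hle u v
    _ = w x y := by simp [ite_and]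

lemma flowCost_add_walkFlow_le (hw : ∀ u v, 0 ≤ w u v) {G : SimpleGraph V} {L : Sym2 V → ℝ}
    (hL : ∀ u v, G.Adj u v → w u v ≤ L s(u, v)) (f : V → V → ℤ) {a b : V}
    (p : G.Walk a b) :
    flowCost (f + walkFlow p) w ≤ flowCost f w + (p.edges.map L).sum := by
  induction p generalizing f with
  | nil => simp [walkFlow]
  | cons h p ih =>
    rw [walkFlow, ← add_assoc]
    calc _ ≤ flowCost (f + unitFlow _ _) w + (p.edges.map L).sum := ih _
      _ ≤ flowCost f w + w _ _ + (p.edges.map L).sum := by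
          gcongr
          exact (flowCost_add_le hw _ _).trans (by gcongr; exact flowCost_unitFlow_le hw _ _)
      _ ≤ _ := by
          simp only [SimpleGraph.Walk.edges_cons, List.map_cons, List.sum_cons]
          linarith [hL _ _ h]

end Cost

def IsTreeMetric {V : Type*} (T : SimpleGraph V) (L : Sym2 V → ℝ) (dT : V → V → ℝ) :
    Prop :=
  ∀ (u v : V) (p : T.Path u v), dT u v = (p.1.edges.map L).sum

namespace IsTreeMetric

variable {V : Type*} {T : SimpleGraph V} {L : Sym2 V → ℝ} {dT : V → V → ℝ}

lemma apply_of_adj (hdT : IsTreeMetric T L dT) {u v : V} (h : T.Adj u v) :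
    dT u v = L s(u, v) := by
  simp [hdT u v (SimpleGraph.Path.singleton h), SimpleGraph.Path.singleton]

lemma nonneg (hdT : IsTreeMetric T L dT) (hT : T.Connected)
    (hL : ∀ u v, T.Adj u v → 0 ≤ L s(u, v)) (u v : V) : 0 ≤ dT u v := by
  obtain ⟨p⟩ := hT.preconnected u v
  rw [hdT u v p.toPath]
  refine List.sum_nonneg fun r hr => ?_
  obtain ⟨e, he, rfl⟩ := List.mem_map.mp hr
  induction e with
  | _ x y => exact hL x y (p.toPath.1.adj_of_mem_edges he)

lemma symm (hdT : IsTreeMetric T L dT) (hT : T.Connected) (u v : V) : dT u v = dT v u := by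
  obtain ⟨p⟩ := hT.preconnected u v
  rw [hdT u v p.toPath, hdT v u p.toPath.reverse]
  simp [SimpleGraph.Path.reverse, List.sum_reverse]

end IsTreeMetric

namespace SimpleGraph

variable {V : Type*} {G : SimpleGraph V}

lemma Walk.exists_edges_eq_append_of_boundary (R : V → Prop) {u z : V} (q : G.Walk u z)
    (hu : R u) (hz : ¬ R z) :
    ∃ x y, G.Adj x y ∧ R x ∧ ¬ R y ∧ ∃ (q₁ : G.Walk u x) (q₂ : G.Walk y z),
      q.edges = q₁.edges ++ s(x, y) :: q₂.edges := by
  induction q with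
  | nil => exact absurd hu hz
  | @cons u c _ h q ih =>
    by_cases hc : R c
    · obtain ⟨x, y, hxy, hx, hy, q₁, q₂, hq⟩ := ih hc hz
      exact ⟨x, y, hxy, hx, hy, .cons h q₁, q₂, by simp [hq]⟩
    · exact ⟨u, c, h, hu, hc, .nil, q, by simp⟩

lemma Reachable.deleteEdges_left_or_right {a b z : V} (h : G.Reachable z a) :
    (G.deleteEdges {s(a, b)}).Reachable z a ∨ (G.deleteEdges {s(a, b)}).Reachable z b := by
  suffices ∀ {a'} (p : G.Walk z a'), a' = a → (G.deleteEdges {s(a, b)}).Reachable z a ∨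
      (G.deleteEdges {s(a, b)}).Reachable z b from h.elim (this · rfl)
  intro a' p ha'
  clear h
  induction p with
  | nil => exact .inl (ha' ▸ .rfl)
  | @cons z c _ h p ih =>
    by_cases he : s(z, c) = s(a, b)
    · rcases Sym2.eq_iff.mp he with ⟨rfl, -⟩ | ⟨rfl, -⟩
      exacts [.inl .rfl, .inr .rfl]
    · have hzc : (G.deleteEdges {s(a, b)}).Adj z c := by simp [h, he]
      exact (ih ha').imp hzc.reachable.trans hzc.reachable.trans

lemma IsTree.sup_edge_deleteEdges {a b x y : V} (hG : G.IsTree)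
    (hx : (G.deleteEdges {s(a, b)}).Reachable a x)
    (hy : ¬ (G.deleteEdges {s(a, b)}).Reachable a y) :
    (G.deleteEdges {s(a, b)} ⊔ edge x y).IsTree := by
  set H := G.deleteEdges {s(a, b)}
  have hxy : (H ⊔ edge x y).Adj x y :=
    Or.inr ((edge_adj _ _ _ _).mpr ⟨by simp, fun h => hy (h ▸ hx)⟩)
  have hyb : H.Reachable y b :=
    ((hG.connected.preconnected y a).deleteEdges_left_or_right).resolve_left fun h => hy h.symm
  have hba : (H ⊔ edge x y).Reachable b a :=
    ((hx.mono le_sup_left).trans (hxy.reachable.trans (hyb.mono le_sup_left))).symm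
  have hreach : ∀ z, (H ⊔ edge x y).Reachable z a := fun z =>
    ((hG.connected.preconnected z a).deleteEdges_left_or_right).elim (·.mono le_sup_left)
      fun h => (h.mono le_sup_left).trans hba
  have : Nonempty V := ⟨a⟩
  refine ⟨.mk fun u v => (hreach u).trans (hreach v).symm, ?_⟩
  exact (hG.isAcyclic.anti (deleteEdges_le _)).sup_edge_of_not_reachable fun h => hy (hx.trans h)

lemma IsTree.exists_exchange_s3 {T : SimpleGraph V} {a b : V} (hG : G.IsTree) (hab : G.Adj a b)
    (habT : ¬ T.Adj a b) (p : T.Walk a b) :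
    ∃ x y, T.Adj x y ∧ ¬ G.Adj x y ∧ (G.deleteEdges {s(a, b)} ⊔ edge x y).IsTree ∧
      ∃ (q₁ : T.Walk a x) (q₂ : T.Walk y b),
        p.edges = q₁.edges ++ s(x, y) :: q₂.edges := by
  set H := G.deleteEdges {s(a, b)}
  have hbr : ¬ H.Reachable a b :=
    isBridge_iff.mp (isAcyclic_iff_forall_adj_isBridge.mp hG.isAcyclic hab)
  obtain ⟨x, y, hxy, hx, hy, hq⟩ :=
    p.exists_edges_eq_append_of_boundary (H.Reachable a) .rfl hbr
  have hxyG : ¬ G.Adj x y := fun h => hy <| hx.trans <| Adj.reachable <|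
    (deleteEdges_adj ..).mpr ⟨h, fun he => habT ((T.adj_congr_of_sym2 he).mp hxy)⟩
  exact ⟨x, y, hxy, hxyG, hG.sup_edge_deleteEdges hx hy, hq⟩

lemma ncard_edgeSet_deleteEdges_sup_edge_sdiff_lt [Finite V] {F : Set (Sym2 V)} {a b x y : V}
    (hab : s(a, b) ∈ G.edgeSet \ F) (hxy : s(x, y) ∈ F) :
    ((G.deleteEdges {s(a, b)} ⊔ edge x y).edgeSet \ F).ncard < (G.edgeSet \ F).ncard := by
  refine (Set.ncard_le_ncard ?_).trans_lt (Set.ncard_sdiff_singleton_lt_of_mem hab)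
  rintro e ⟨he, heF⟩
  rw [edgeSet_sup, edgeSet_deleteEdges] at he
  rcases he with ⟨he, hne⟩ | he
  · exact ⟨⟨he, heF⟩, hne⟩
  · exact absurd (Set.mem_singleton_iff.mp (edgeSet_edge_subset he) ▸ hxy) heF

lemma IsTree.eq_of_le {H : SimpleGraph V} (hG : G.IsTree) (hH : H.IsTree) (h : G ≤ H) : G = H :=
  (isTree_iff_minimal_connected.mp hH).eq_of_le hG.connected h

variable {M : Type*} [AddCommGroup M] {a b x y : V}

lemma sum_ite_sym2_eq [Fintype V] (hne : a ≠ b) (g : V → V → M) (u : V) :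
    ∑ v, (if s(u, v) = s(a, b) then g u v else 0) =
      (if u = a then g a b else 0) + (if u = b then g b a else 0) := by
  have h : ∀ v, (if s(u, v) = s(a, b) then g u v else 0) =
      (if u = a ∧ v = b then g a b else 0) + (if u = b ∧ v = a then g b a else 0) := fun v => by
    by_cases h1 : u = a ∧ v = b
    · obtain ⟨rfl, rfl⟩ := h1; simp [hne]
    · by_cases h2 : u = b ∧ v = a
      · obtain ⟨rfl, rfl⟩ := h2; simp [Sym2.eq_swap, hne.symm]
      · simp only [h1, h2, if_false, Sym2.eq_iff]; simp_all
  rw [Finset.sum_congr rfl fun v _ => h v]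
  simp [Finset.sum_add_distrib, ite_and]

lemma deleteEdges_sup_edge_adj (hne : x ≠ y) {u v : V} :
    (G.deleteEdges {s(a, b)} ⊔ edge x y).Adj u v ↔
      (G.Adj u v ∧ s(u, v) ≠ s(a, b)) ∨ s(u, v) = s(x, y) := by
  simp only [sup_adj, deleteEdges_adj, Set.mem_singleton_iff, adj_edge]
  refine or_congr Iff.rfl ⟨fun h => h.1.symm, fun h => ⟨h.symm, fun huv => ?_⟩⟩
  subst huv
  exact hne <| (Sym2.eq_iff.mp h).elim (fun h => h.1.symm.trans h.2) fun h => h.2.symm.trans h.1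

lemma sum_ite_adj_of_exchange [Fintype V] {H : SimpleGraph V}
    (hH : ∀ u v, H.Adj u v ↔ (G.Adj u v ∧ s(u, v) ≠ s(a, b)) ∨ s(u, v) = s(x, y))
    (hab : G.Adj a b) (hxy : ¬ G.Adj x y) (hne : x ≠ y) (g : V → V → M) (u : V) :
    ∑ v, (if H.Adj u v then g u v else 0) =
      ∑ v, (if G.Adj u v then g u v else 0) -
        ((if u = a then g a b else 0) + (if u = b then g b a else 0)) +
        ((if u = x then g x y else 0) + (if u = y then g y x else 0)) := by
  have hpt : ∀ v, (if H.Adj u v then g u v else 0) = (if G.Adj u v then g u v else 0) -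
      (if s(u, v) = s(a, b) then g u v else 0) + (if s(u, v) = s(x, y) then g u v else 0) := by
    intro v
    have hab' : s(u, v) = s(a, b) → G.Adj u v := fun h => (G.adj_congr_of_sym2 h).mpr hab
    have hxy' : s(u, v) = s(x, y) → ¬ G.Adj u v := fun h => (G.adj_congr_of_sym2 h).not.mpr hxy
    by_cases h1 : s(u, v) = s(a, b)
    · have h2 : s(u, v) ≠ s(x, y) := fun h2 => hxy' h2 (hab' h1)
      rw [if_neg (by rw [hH]; tauto), if_pos (hab' h1), if_pos h1, if_neg h2, sub_self, add_zero]
    by_cases h2 : s(u, v) = s(x, y)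
    · rw [if_pos ((hH u v).mpr (.inr h2)), if_neg (hxy' h2), if_neg h1, if_pos h2, sub_zero,
        zero_add]
    · have h3 : H.Adj u v ↔ G.Adj u v := by rw [hH]; tauto
      rw [if_neg h1, if_neg h2, sub_zero, add_zero, if_congr h3 rfl rfl]
  rw [Finset.sum_congr rfl fun v _ => hpt v, Finset.sum_add_distrib, Finset.sum_sub_distrib,
    sum_ite_sym2_eq hab.ne, sum_ite_sym2_eq hne]

end SimpleGraph

section Exchange

open SimpleGraph

variable {V : Type*} [Fintype V]

lemma degreeOf_eq_sum (G : SimpleGraph V) (u : V) :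
    (degreeOf G u : ℤ) = ∑ v, if G.Adj u v then 1 else 0 := by
  rw [degreeOf, Set.ncard_eq_toFinset_card', Set.toFinset_ofPred, Finset.card_filter]
  push_cast
  rfl

variable {G : SimpleGraph V}

lemma one_le_degreeOf [Nontrivial V] (hG : G.Connected) (u : V) : 1 ≤ degreeOf G u := by
  obtain ⟨v, hv⟩ := exists_ne u
  obtain ⟨p⟩ := hG.preconnected u v
  cases p with
  | nil => exact absurd rfl hv
  | cons h _ => exact (Set.ncard_pos (Set.toFinite _)).mpr ⟨_, h⟩

variable {a b x y : V}

lemma degreeOf_deleteEdges_sup_edge (hab : G.Adj a b) (hxy : ¬ G.Adj x y) (hne : x ≠ y)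
    (u : V) :
    (degreeOf (G.deleteEdges {s(a, b)} ⊔ edge x y) u : ℤ) = degreeOf G u -
      ((if u = a then 1 else 0) + (if u = b then 1 else 0)) +
      ((if u = x then 1 else 0) + (if u = y then 1 else 0)) := by
  simp only [degreeOf_eq_sum]
  exact sum_ite_adj_of_exchange (fun _ _ => deleteEdges_sup_edge_adj hne) hab hxy hne
    (fun _ _ => 1) u

lemma weightOf_deleteEdges_sup_edge (hab : G.Adj a b) (hxy : ¬ G.Adj x y) (hne : x ≠ y)
    {w : V → V → ℝ} (hw : ∀ u v, w u v = w v u) :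
    weightOf (G.deleteEdges {s(a, b)} ⊔ edge x y) w = weightOf G w - w a b + w x y := by
  rw [weightOf, weightOf, Finset.sum_congr rfl fun u _ =>
    sum_ite_adj_of_exchange (fun _ _ => deleteEdges_sup_edge_adj hne) hab hxy hne w u]
  simp only [Finset.sum_add_distrib, Finset.sum_sub_distrib, Finset.sum_ite_eq', Finset.mem_univ,
    if_true, hw b a, hw y x]
  ring

end Exchange

open SimpleGraph in
theorem exists_flow_of_isTree {V : Type*} [Fintype V] {T : SimpleGraph V} (hT : T.IsTree)
    {L : Sym2 V → ℝ} (hL : ∀ u v, T.Adj u v → 0 ≤ L s(u, v)) {dT : V → V → ℝ}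
    (hdT : IsTreeMetric T L dT) (T' : SimpleGraph V) (hT' : T'.IsTree) :
    ∃ f, IsSkew f ∧ (∀ v, surplus f v = degreeOf T v - degreeOf T' v) ∧
      flowCost f dT ≤ weightOf T' dT - weightOf T dT := by
  have hdT_nonneg := hdT.nonneg hT.connected hL
  have hdT_le : ∀ u v, T.Adj u v → dT u v ≤ L s(u, v) := fun u v h => (hdT.apply_of_adj h).le
  induction h : (T'.edgeSet \ T.edgeSet).ncard using Nat.strong_induction_on generalizing T' with
  | _ n ih =>
  by_cases hsub : T'.edgeSet ⊆ T.edgeSet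
  · obtain rfl := hT'.eq_of_le hT (edgeSet_subset_edgeSet.mp hsub)
    exact ⟨0, isSkew_zero, fun v => by simp [surplus], by simp [flowCost]⟩
  obtain ⟨e, hab, habT⟩ := Set.not_subset.mp hsub
  induction e with | h a b =>
  obtain ⟨p⟩ := hT.connected.preconnected a b
  obtain ⟨x, y, hxy, hxy', hT'', q₁, q₂, hq⟩ := hT'.exists_exchange_s3 hab habT p.toPath.1
  obtain ⟨f, hf, hsurp, hcost⟩ := ih _
    (h ▸ ncard_edgeSet_deleteEdges_sup_edge_sdiff_lt ⟨hab, habT⟩ hxy) _ hT'' rfl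
  refine ⟨f + walkFlow q₁ + walkFlow q₂.reverse,
    (hf.add (isSkew_walkFlow _)).add (isSkew_walkFlow _), fun v => ?_, ?_⟩
  · rw [(hf.add (isSkew_walkFlow q₁)).surplus_add_walkFlow, hf.surplus_add_walkFlow, hsurp,
      degreeOf_deleteEdges_sup_edge hab hxy' hxy.ne]
    ring
  · have hsplit : dT a b = (q₁.edges.map L).sum + dT x y + (q₂.edges.map L).sum := by
      rw [hdT a b p.toPath, hq, hdT.apply_of_adj hxy, List.map_append, List.map_cons,
        List.sum_append, List.sum_cons, add_assoc]
    have cost₁ := flowCost_add_walkFlow_le hdT_nonneg hdT_le f q₁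
    have cost₂ := flowCost_add_walkFlow_le hdT_nonneg hdT_le (f + walkFlow q₁) q₂.reverse
    rw [Walk.edges_reverse, List.map_reverse, List.sum_reverse] at cost₂
    rw [weightOf_deleteEdges_sup_edge hab hxy' hxy.ne (hdT.symm hT.connected)] at hcost
    linarith

theorem stmt3_general {V : Type*} [Fintype V] (hV : 2 ≤ Fintype.card V)
    (T : SimpleGraph V) (hT : T.IsTree)
    (we : V → V → ℝ) (hsym : ∀ a b, we a b = we b a)
    (hpos : ∀ a b, T.Adj a b → 0 < we a b)
    (dT : V → V → ℝ)
    (hdT : ∀ (u v : V) (p : T.Path u v),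
      dT u v = (p.1.edges.map (Sym2.lift ⟨we, hsym⟩)).sum)
    (d : V → ℕ)
    (Tstar : SimpleGraph V) (hTstar : Tstar.IsTree)
    (hdeg : ∀ v, degreeOf Tstar v ≤ d v) :
    ∃ f : V → V → ℤ, IsSkew f ∧ (∀ v, f v v = 0) ∧
      FeasibleFlow T d f ∧ LegalFlow T f ∧
      flowCost f dT ≤ weightOf Tstar dT - weightOf T dT := by
  obtain ⟨f, hf, hsurplus, hcost⟩ :=
    exists_flow_of_isTree hT (fun a b h => (hpos a b h).le) hdT Tstar hTstar
  have : Nontrivial V := Fintype.one_lt_card_iff_nontrivial.mp hV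
  refine ⟨f, hf, hf.apply_self, fun v => ?_, fun v => ?_, hcost⟩
  · have := hdeg v
    rw [hsurplus]
    omega
  · have := one_le_degreeOf hTstar.connected v
    rw [hsurplus]
    omega

/-- Let `T` be a tree with positive edge weights `we` and let `dT` be the induced tree
metric (the weight of the unique `T`-path between two vertices).  If `T*` is any spanning
tree meeting the degree bounds `d` (with `d v ≥ 1`), then there is a feasible legal integer
flow of cost at most `w(T*) - w(T)`, weights computed in the metric `dT`. -/
theorem stmt3 {V : Type*} [Fintype V] (hV : 2 ≤ Fintype.card V)
    (T : SimpleGraph V) (hT : T.IsTree)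
    (we : V → V → ℝ) (hsym : ∀ a b, we a b = we b a)
    (hpos : ∀ a b, T.Adj a b → 0 < we a b)
    (dT : V → V → ℝ)
    (hdT : ∀ (u v : V) (p : T.Path u v),
      dT u v = (p.1.edges.map (Sym2.lift ⟨we, hsym⟩)).sum)
    (d : V → ℕ) (hd : ∀ v, 1 ≤ d v)
    (Tstar : SimpleGraph V) (hTstar : Tstar.IsTree)
    (hdeg : ∀ v, degreeOf Tstar v ≤ d v) :
    ∃ f : V → V → ℤ, IsSkew f ∧ (∀ v, f v v = 0) ∧
      FeasibleFlow T d f ∧ LegalFlow T f ∧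
      flowCost f dT ≤ weightOf Tstar dT - weightOf T dT :=
  stmt3_general hV T hT we hsym hpos dT hdT d Tstar hTstar hdeg
end

section
/- Let T' be a tree on a finite vertex set V and let S be a nonempty subset of V. Then the number of edges of T' with exactly one endpoint in S is at least (Σ_{v ∈ S} deg_{T'}(v)) − 2(|S| − 1). -/
/-!
Summing degrees over `S` counts every edge of `T'` inside `S` twice and every edge leaving `S`
once. The edges inside `S` form an acyclic graph on `|S|` vertices, so there are at most
`|S| - 1` of them.
-/

open scoped Classical

open Finset

namespace SimpleGraph

variable {V : Type*} [Fintype V] {G : SimpleGraph V} [DecidableRel G.Adj]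

theorem IsAcyclic.card_edgeFinset_add_one_le [Nonempty V] (hG : G.IsAcyclic) :
    #G.edgeFinset + 1 ≤ Fintype.card V := by
  obtain ⟨T, hGT, -, hT⟩ := connected_top.exists_isTree_le_of_le_of_isAcyclic le_top hG
  rw [← hT.card_edgeFinset]
  exact Nat.add_le_add_right (card_le_card (edgeFinset_mono hGT)) 1

theorem degree_induce_finset (S : Finset V) (v : (S : Set V)) :
    (G.induce (S : Set V)).degree v = #{u | G.Adj v u ∧ u ∈ S} := by
  rw [← card_neighborFinset_eq_degree]
  refine card_nbij (↑) (fun u hu => ?_) Subtype.val_injective.injOn fun u hu => ?_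
  · simpa using hu
  · simp only [coe_filter, mem_univ, true_and] at hu
    exact ⟨⟨u, hu.2⟩, by simpa using hu.1, rfl⟩

theorem IsAcyclic.sum_card_adj_mem_add_two_le (hG : G.IsAcyclic) {S : Finset V}
    (hS : S.Nonempty) : ∑ v ∈ S, #{u | G.Adj v u ∧ u ∈ S} + 2 ≤ 2 * #S := by
  have : Nonempty (S : Set V) := hS.coe_sort
  have hforest := (hG.induce (S : Set V)).card_edgeFinset_add_one_le
  simp only [Fintype.card_coe, coe_sort_coe] at hforest
  calc ∑ v ∈ S, #{u | G.Adj v u ∧ u ∈ S} + 2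
      = ∑ v : (S : Set V), (G.induce (S : Set V)).degree v + 2 := by
        simp_rw [degree_induce_finset, ← sum_coe_sort S]
        rfl
    _ = 2 * (#(G.induce (S : Set V)).edgeFinset + 1) := by
        rw [sum_degrees_eq_twice_card_edges, mul_add_one]
    _ ≤ 2 * #S := by omega

theorem degree_eq_card_adj_mem_add_card_adj_notMem (S : Finset V) (v : V) :
    G.degree v = #{u | G.Adj v u ∧ u ∈ S} + #{u | G.Adj v u ∧ u ∉ S} := by
  rw [← card_neighborFinset_eq_degree, neighborFinset_eq_filter,
    ← card_filter_add_card_filter_not (· ∈ S), filter_filter, filter_filter]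

theorem ncard_adj_mem_notMem_eq_sum (S : Finset V) :
    {p : V × V | G.Adj p.1 p.2 ∧ p.1 ∈ S ∧ p.2 ∉ S}.ncard =
      ∑ v ∈ S, #{u | G.Adj v u ∧ u ∉ S} := by
  have hset : {p : V × V | G.Adj p.1 p.2 ∧ p.1 ∈ S ∧ p.2 ∉ S} =
      ↑{p ∈ S ×ˢ (univ : Finset V) | G.Adj p.1 p.2 ∧ p.2 ∉ S} := by
    ext p
    simp only [Set.mem_ofPred_eq, coe_filter, mem_product, mem_univ, and_true]
    tauto
  rw [hset, Set.ncard_coe_finset, card_filter, sum_product]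
  simp_rw [← card_filter]

end SimpleGraph

theorem degreeOf_eq_degree {V : Type*} [Fintype V] (G : SimpleGraph V) [DecidableRel G.Adj]
    (v : V) : degreeOf G v = G.degree v := by
  rw [degreeOf, ← G.card_neighborSet_eq_degree, ← Nat.card_eq_fintype_card, Nat.card_coe_set_eq]
  rfl

open SimpleGraph

/-- For a tree `T'` on a finite vertex set `V` and a nonempty subset `S ⊆ V`, the number of
edges of `T'` with exactly one endpoint in `S` (counted as ordered pairs going out of `S`,
so each crossing edge is counted exactly once) is at least
`(Σ_{v ∈ S} deg_{T'}(v)) − 2(|S| − 1)`. -/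
theorem stmt5 {V : Type*} [Fintype V]
    (T' : SimpleGraph V) (hT' : T'.IsTree)
    (S : Finset V) (hS : S.Nonempty) :
    (∑ v ∈ S, (degreeOf T' v : ℤ)) - 2 * ((S.card : ℤ) - 1) ≤
      (Set.ncard {p : V × V | T'.Adj p.1 p.2 ∧ p.1 ∈ S ∧ p.2 ∉ S} : ℤ) := by
  have hdeg : ∑ v ∈ S, degreeOf T' v =
      ∑ v ∈ S, #{u | T'.Adj v u ∧ u ∈ S} + ∑ v ∈ S, #{u | T'.Adj v u ∧ u ∉ S} := by
    simp only [degreeOf_eq_degree, degree_eq_card_adj_mem_add_card_adj_notMem S,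
      sum_add_distrib]
  have hinside := hT'.isAcyclic.sum_card_adj_mem_add_two_le hS
  rw [ncard_adj_mem_notMem_eq_sum]
  push_cast [← Nat.cast_sum, hdeg]
  omega
end

section
/- For every ε > 0 there exists a finite set P of at least 2 points in ℝ² such that, with distances given by the Euclidean (L2) norm, every Hamiltonian path on P has length at least (2 − ε) · w(T_min), where T_min is a minimum spanning tree of P under the Euclidean distance. -/
open scoped Classical

/-- The Euclidean (L2) distance between two points of `ℝ²`. -/
noncomputable def ptDist (p q : ℝ × ℝ) : ℝ := Real.sqrt ((p.1 - q.1) ^ 2 + (p.2 - q.2) ^ 2)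

/-- The length of the path visiting the points of the list `l` in order. -/
noncomputable def pathLength (l : List (ℝ × ℝ)) : ℝ :=
  ((l.zip l.tail).map (fun pq => ptDist pq.1 pq.2)).sum

/-! The witness is built from Ford circles. For the fractions `x = j/(n+1)`, `0 ≤ j ≤ n+1`, take
the tangency point `(x, 0)` of the Ford circle at `x` and its centre `(x, r x)`, where
`r x = 1/(2 den(x)²)`. Ford circles have disjoint interiors, so any two of these points are at
distance at least the sum of their heights; a Hamiltonian path counts the height of every point
twice except at its two ends, hence has length at least `2 Σ r - 1`. The segment `[0, 1]` of the
axis together with the vertical radii connects the points with total length at most `2 + Σ r`,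
so a minimum spanning tree weighs no more. Finally `Σ r` is unbounded: when every prime `q` of a
finite set divides `n + 1`, the fractions `p/q` contribute `(q - 1)/(2q²) ≥ 1/(4q)`, and the
reciprocals of the primes have divergent sum. -/

section SpanningTree

variable {V : Type*}

lemma weightOf_nonneg [Fintype V] (G : SimpleGraph V) {w : V → V → ℝ}
    (hw : ∀ x y, 0 ≤ w x y) : 0 ≤ weightOf G w := by
  unfold weightOf
  refine div_nonneg (Finset.sum_nonneg fun u _ => Finset.sum_nonneg fun v _ => ?_) zero_le_two
  split_ifs
  exacts [hw u v, le_rfl]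

lemma weightOf_mono [Fintype V] {w : V → V → ℝ} {G H : SimpleGraph V} (hGH : G ≤ H)
    (hw : ∀ x y, 0 ≤ w x y) : weightOf G w ≤ weightOf H w := by
  unfold weightOf
  gcongr with u _ v _
  split_ifs with hG hH
  exacts [le_rfl, absurd (hGH hG) hH, hw u v, le_rfl]

lemma weightOf_fromRel_le_sum [Fintype V] {w : V → V → ℝ} (hsymm : ∀ x y, w x y = w y x)
    (hw : ∀ x y, 0 ≤ w x y) (f : V → V) :
    weightOf (SimpleGraph.fromRel fun x y => f x = y) w ≤ ∑ x, w x (f x) := by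
  calc weightOf (SimpleGraph.fromRel fun x y => f x = y) w
      ≤ (∑ u, ∑ v, ((if f u = v then w u v else 0) + (if f v = u then w u v else 0))) / 2 := by
        unfold weightOf
        gcongr with u _ v _
        have := hw u v
        simp only [SimpleGraph.fromRel_adj]
        split_ifs <;> grind
    _ = ∑ x, w x (f x) := by
        simp only [Finset.sum_add_distrib, Finset.sum_ite_eq, Finset.mem_univ, if_true]
        rw [Finset.sum_comm]
        simp only [Finset.sum_ite_eq, Finset.mem_univ, if_true, hsymm _ (f _)]
        ring

lemma reachable_iterate_fromRel (f : V → V) (x : V) (k : ℕ) :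
    (SimpleGraph.fromRel fun x y => f x = y).Reachable x (f^[k] x) := by
  induction k with
  | zero => rfl
  | succ k ih =>
    refine ih.trans ?_
    rw [Function.iterate_succ_apply']
    by_cases h : f^[k] x = f (f^[k] x)
    · rw [← h]
    · exact (SimpleGraph.fromRel_adj _ _ _ |>.2 ⟨h, Or.inl rfl⟩).reachable

lemma connected_fromRel_of_iterate_eq (f : V → V) (root : V)
    (hroot : ∀ x, ∃ k, f^[k] x = root) : (SimpleGraph.fromRel fun x y => f x = y).Connected := by
  have hreach (x : V) : (SimpleGraph.fromRel fun x y => f x = y).Reachable x root := by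
    obtain ⟨k, hk⟩ := hroot x
    exact hk ▸ reachable_iterate_fromRel f x k
  exact (SimpleGraph.connected_iff _).2 ⟨fun x y => (hreach x).trans (hreach y).symm, ⟨root⟩⟩

lemma exists_isTree_weightOf_le_sum [Fintype V] {w : V → V → ℝ} (hsymm : ∀ x y, w x y = w y x)
    (hw : ∀ x y, 0 ≤ w x y) (f : V → V) (root : V) (hroot : ∀ x, ∃ k, f^[k] x = root) :
    ∃ T : SimpleGraph V, T.IsTree ∧ weightOf T w ≤ ∑ x, w x (f x) := by
  obtain ⟨T, hle, hT⟩ := (connected_fromRel_of_iterate_eq f root hroot).exists_isTree_le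
  exact ⟨T, hT, (weightOf_mono hle hw).trans (weightOf_fromRel_le_sum hsymm hw f)⟩

end SpanningTree

lemma ptDist_nonneg (p q : ℝ × ℝ) : 0 ≤ ptDist p q := Real.sqrt_nonneg _

lemma ptDist_comm (p q : ℝ × ℝ) : ptDist p q = ptDist q p := by
  unfold ptDist; ring_nf

lemma ptDist_same_fst (x y y' : ℝ) : ptDist (x, y) (x, y') = |y - y'| := by
  simp [ptDist, Real.sqrt_sq_eq_abs]

lemma ptDist_same_snd (x x' y : ℝ) : ptDist (x, y) (x', y) = |x - x'| := by
  simp [ptDist, Real.sqrt_sq_eq_abs]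

lemma abs_sub_snd_le_ptDist (p q : ℝ × ℝ) : |p.2 - q.2| ≤ ptDist p q := by
  rw [← Real.sqrt_sq_eq_abs]
  exact Real.sqrt_le_sqrt (by nlinarith [sq_nonneg (p.1 - q.1)])

lemma le_ptDist_iff {p q : ℝ × ℝ} {d : ℝ} (hd : 0 ≤ d) :
    d ≤ ptDist p q ↔ d ^ 2 ≤ (p.1 - q.1) ^ 2 + (p.2 - q.2) ^ 2 :=
  Real.le_sqrt hd (by positivity)

@[simp] lemma pathLength_singleton (x : ℝ × ℝ) : pathLength [x] = 0 := rfl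

@[simp] lemma pathLength_cons_cons (x y : ℝ × ℝ) (l : List (ℝ × ℝ)) :
    pathLength (x :: y :: l) = ptDist x y + pathLength (y :: l) := by
  simp [pathLength]

lemma two_mul_sum_sub_le_pathLength (h : ℝ × ℝ → ℝ) (x : ℝ × ℝ) (l : List (ℝ × ℝ))
    (hl : (x :: l).IsChain fun p q => h p + h q ≤ ptDist p q) :
    2 * ((x :: l).map h).sum - h x - h (l.getLastD x) ≤ pathLength (x :: l) := by
  induction l generalizing x with
  | nil => simp; linarith
  | cons y l ih =>
    rw [List.isChain_cons_cons] at hl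
    have := ih y hl.2
    simp only [List.map_cons, List.sum_cons, List.getLastD_cons, pathLength_cons_cons] at *
    linarith

lemma Rat.one_le_abs_sub_mul_den_mul_den {a b : ℚ} (h : a ≠ b) :
    1 ≤ |a - b| * a.den * b.den := by
  set z : ℤ := a.num * b.den - b.num * a.den
  have hz : (z : ℚ) = (a - b) * a.den * b.den := by
    have ha := Rat.mul_den_eq_num a
    have hb := Rat.mul_den_eq_num b
    push_cast [z]
    rw [← ha, ← hb]
    ring
  have hz0 : z ≠ 0 := by
    rintro hz0
    rw [hz0, Int.cast_zero, eq_comm] at hz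
    simp [sub_eq_zero, h] at hz
  have : (1 : ℚ) ≤ |(z : ℚ)| := by exact_mod_cast Int.one_le_abs hz0
  rwa [hz, abs_mul, abs_mul, Nat.abs_cast, Nat.abs_cast] at this

lemma Rat.den_natCast_div_prime {p q : ℕ} (hq : q.Prime) (hp : 0 < p) (hpq : p < q) :
    ((p : ℚ) / q).den = q := by
  have hcop : Nat.Coprime p q :=
    ((Nat.Prime.coprime_iff_not_dvd hq).2 (Nat.not_dvd_of_pos_of_lt hp hpq)).symm
  have := Rat.den_div_eq_of_coprime (a := p) (b := q) (by exact_mod_cast hq.pos) hcop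
  push_cast at this
  exact_mod_cast this

noncomputable def fordRadius (x : ℚ) : ℝ := 1 / (2 * x.den ^ 2)

noncomputable def fordCenter (x : ℚ) : ℝ × ℝ := (x, fordRadius x)

def fordPoints : Set (ℝ × ℝ) := Set.range (fun x : ℚ => ((x : ℝ), 0)) ∪ Set.range fordCenter

lemma fordRadius_pos (x : ℚ) : 0 < fordRadius x := by
  have : (0 : ℝ) < x.den := by exact_mod_cast x.pos
  unfold fordRadius; positivity

lemma fordRadius_le_half (x : ℚ) : fordRadius x ≤ 1 / 2 := by
  have : (1 : ℝ) ≤ x.den := by exact_mod_cast x.pos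
  unfold fordRadius
  gcongr
  nlinarith

lemma four_mul_fordRadius_mul_le {a b : ℚ} (h : a ≠ b) :
    4 * fordRadius a * fordRadius b ≤ ((a : ℝ) - b) ^ 2 := by
  have hsep : (1 : ℝ) ≤ |(a : ℝ) - b| * a.den * b.den := by
    exact_mod_cast Rat.one_le_abs_sub_mul_den_mul_den h
  have hda : (0 : ℝ) < a.den := by exact_mod_cast a.pos
  have hdb : (0 : ℝ) < b.den := by exact_mod_cast b.pos
  have hr : 4 * fordRadius a * fordRadius b = 1 / (a.den * b.den : ℝ) ^ 2 := by
    unfold fordRadius; field_simp; ring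
  rw [hr, div_le_iff₀ (by positivity), ← sq_abs]
  nlinarith [one_le_pow₀ (n := 2) hsep]

lemma snd_add_snd_le_ptDist {p q : ℝ × ℝ} (hp : p ∈ fordPoints) (hq : q ∈ fordPoints)
    (hpq : p ≠ q) : p.2 + q.2 ≤ ptDist p q := by
  rcases hp with ⟨a, rfl⟩ | ⟨a, rfl⟩ <;> rcases hq with ⟨b, rfl⟩ | ⟨b, rfl⟩
  · simpa using ptDist_nonneg _ _
  · simpa [fordCenter, abs_of_pos (fordRadius_pos b)] using
      abs_sub_snd_le_ptDist (a, 0) (fordCenter b)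
  · simpa [fordCenter, abs_of_pos (fordRadius_pos a)] using
      abs_sub_snd_le_ptDist (fordCenter a) (b, 0)
  · -- the Ford circles at `a` and `b` do not overlap
    have hab : a ≠ b := by rintro rfl; exact hpq rfl
    rw [le_ptDist_iff (by simp only [fordCenter]; linarith [fordRadius_pos a, fordRadius_pos b])]
    simp only [fordCenter]
    nlinarith [four_mul_fordRadius_mul_le hab]

lemma snd_le_half_of_mem_fordPoints {p : ℝ × ℝ} (hp : p ∈ fordPoints) : p.2 ≤ 1 / 2 := by
  rcases hp with ⟨a, rfl⟩ | ⟨a, rfl⟩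
  · norm_num
  · exact fordRadius_le_half a

lemma two_mul_sum_snd_sub_one_le_pathLength {l : List (ℝ × ℝ)} (hl : l.Nodup) (hne : l ≠ [])
    (hford : ∀ p ∈ l, p ∈ fordPoints) : 2 * (l.map Prod.snd).sum - 1 ≤ pathLength l := by
  obtain ⟨x, t, rfl⟩ := List.exists_cons_of_ne_nil hne
  have hchain : (x :: t).IsChain fun p q => p.2 + q.2 ≤ ptDist p q :=
    hl.isChain.imp_of_mem_imp fun p q hp hq hpq =>
      snd_add_snd_le_ptDist (hford p hp) (hford q hq) hpq
  have hx := snd_le_half_of_mem_fordPoints (hford x List.mem_cons_self)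
  have hlast := snd_le_half_of_mem_fordPoints (hford _ (List.getLastD_mem_cons (l := t) (a := x)))
  linarith [two_mul_sum_sub_le_pathLength Prod.snd x t hchain]

lemma one_div_four_mul_le_sum_fordRadius {q : ℕ} (hq : q.Prime) :
    1 / (4 * q : ℝ) ≤ ∑ p ∈ Finset.Ico 1 q, fordRadius (p / q) := by
  have hrad (p : ℕ) (hp : p ∈ Finset.Ico 1 q) : fordRadius (p / q) = 1 / (2 * q ^ 2) := by
    rw [Finset.mem_Ico] at hp
    rw [fordRadius, Rat.den_natCast_div_prime hq hp.1 hp.2]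
  have hq2 : (2 : ℝ) ≤ q := by exact_mod_cast hq.two_le
  rw [Finset.sum_congr rfl hrad, Finset.sum_const, Nat.card_Ico, nsmul_eq_mul,
    Nat.cast_sub hq.one_le, div_le_iff₀ (by positivity)]
  field_simp
  push_cast
  nlinarith

section FordGrid

variable (n : ℕ)

def gridRat (j : Fin (n + 2)) : ℚ := j / (n + 1)

-- `inl j` is the tangency point of the Ford circle at `gridRat n j` with the axis, `inr j` its
-- centre.
noncomputable def gridPoint : Fin (n + 2) ⊕ Fin (n + 2) → ℝ × ℝ :=
  Sum.elim (fun j => ((gridRat n j : ℝ), 0)) (fun j => fordCenter (gridRat n j))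

noncomputable def fordGrid : Finset (ℝ × ℝ) := Finset.univ.image (gridPoint n)

def gridParent : Fin (n + 2) ⊕ Fin (n + 2) → Fin (n + 2) ⊕ Fin (n + 2) :=
  Sum.elim (fun j => .inl ⟨j - 1, by omega⟩) .inl

noncomputable def gridRadiusSum : ℝ := ∑ j, fordRadius (gridRat n j)

variable {n}

lemma gridRat_injective : Function.Injective (gridRat n) := by
  intro j k h
  simp only [gridRat] at h
  field_simp at h
  exact Fin.ext (by exact_mod_cast h)

lemma gridPoint_injective : Function.Injective (gridPoint n) := by
  rintro (j | j) (k | k) h <;>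
    simp only [gridPoint, fordCenter, Sum.elim_inl, Sum.elim_inr, Prod.mk.injEq,
      Rat.cast_inj] at h
  · rw [gridRat_injective h.1]
  · exact absurd h.2.symm (fordRadius_pos _).ne'
  · exact absurd h.2 (fordRadius_pos _).ne'
  · rw [gridRat_injective h.1]

lemma card_fordGrid : (fordGrid n).card = 2 * (n + 2) := by
  rw [fordGrid, Finset.card_image_of_injective _ gridPoint_injective]
  simp
  ring

lemma fordGrid_subset_fordPoints : ↑(fordGrid n) ⊆ fordPoints := by
  simp only [fordGrid, Finset.coe_image, Finset.coe_univ, Set.image_univ, Set.range_subset_iff]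
  rintro (j | j)
  exacts [Or.inl ⟨_, rfl⟩, Or.inr ⟨_, rfl⟩]

lemma sum_snd_fordGrid : ∑ p ∈ fordGrid n, p.2 = gridRadiusSum n := by
  rw [fordGrid, Finset.sum_image fun i _ k _ h => gridPoint_injective h, Fintype.sum_sum_type]
  simp [gridPoint, fordCenter, gridRadiusSum]

lemma iterate_gridParent_inl (k : ℕ) (j : Fin (n + 2)) :
    (gridParent n)^[k] (.inl j) = .inl ⟨j - k, by omega⟩ := by
  induction k with
  | zero => rfl
  | succ k ih =>
    rw [Function.iterate_succ_apply', ih]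
    simp only [gridParent, Sum.elim_inl, Sum.inl.injEq, Fin.mk.injEq]
    omega

lemma exists_iterate_gridParent_eq_root (i : Fin (n + 2) ⊕ Fin (n + 2)) :
    ∃ k, (gridParent n)^[k] i = .inl 0 := by
  rcases i with j | j
  · exact ⟨j, by rw [iterate_gridParent_inl]; simp⟩
  · refine ⟨j + 1, ?_⟩
    rw [Function.iterate_succ_apply, show gridParent n (.inr j) = .inl j from rfl,
      iterate_gridParent_inl]
    simp

lemma sum_ptDist_gridParent_le :
    ∑ i, ptDist (gridPoint n i) (gridPoint n (gridParent n i)) ≤ 2 + gridRadiusSum n := by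
  have hspine (j : Fin (n + 2)) :
      ptDist (gridPoint n (.inl j)) (gridPoint n (gridParent n (.inl j))) ≤ 1 / (n + 1) := by
    simp only [gridPoint, gridParent, Sum.elim_inl]
    rw [ptDist_same_snd, gridRat, gridRat, ← Rat.cast_sub, ← sub_div]
    push_cast
    rw [abs_div, abs_of_pos (by positivity : (0 : ℝ) < n + 1)]
    gcongr
    have h₁ : ((j - 1 : ℕ) : ℝ) ≤ j := by exact_mod_cast Nat.sub_le j 1
    have h₂ : (j : ℝ) ≤ (j - 1 : ℕ) + 1 := by norm_cast; omega
    rw [abs_le]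
    constructor <;> linarith
  have hspoke (j : Fin (n + 2)) :
      ptDist (gridPoint n (.inr j)) (gridPoint n (gridParent n (.inr j))) =
        fordRadius (gridRat n j) := by
    simp only [gridPoint, gridParent, fordCenter, Sum.elim_inl, Sum.elim_inr]
    rw [ptDist_same_fst, sub_zero, abs_of_pos (fordRadius_pos _)]
  have hspine_sum : ∑ j : Fin (n + 2), (1 / (n + 1) : ℝ) ≤ 2 := by
    rw [Finset.sum_const, Finset.card_univ, Fintype.card_fin, nsmul_eq_mul,
      ← mul_div_assoc, mul_one, div_le_iff₀ (by positivity)]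
    push_cast
    linarith
  rw [Fintype.sum_sum_type, gridRadiusSum]
  simp only [hspoke]
  linarith [Finset.sum_le_sum fun j (_ : j ∈ Finset.univ) => hspine j]

lemma exists_isTree_weightOf_fordGrid_le : ∃ T : SimpleGraph (fordGrid n), T.IsTree ∧
    weightOf T (fun p q => ptDist p.1 q.1) ≤ 2 + gridRadiusSum n := by
  let e : (Fin (n + 2) ⊕ Fin (n + 2)) ≃ fordGrid n := Equiv.ofBijective
    (fun i => ⟨gridPoint n i, Finset.mem_image_of_mem _ (Finset.mem_univ i)⟩)
    ⟨fun i k h => gridPoint_injective (congrArg Subtype.val h), fun ⟨p, hp⟩ => by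
      obtain ⟨i, -, rfl⟩ := Finset.mem_image.1 hp; exact ⟨i, rfl⟩⟩
  let f : fordGrid n → fordGrid n := e ∘ gridParent n ∘ e.symm
  have hconj : Function.Semiconj e (gridParent n) f := fun i => by simp [f]
  have hroot (p : fordGrid n) : ∃ k, f^[k] p = e (.inl 0) := by
    obtain ⟨k, hk⟩ := exists_iterate_gridParent_eq_root (e.symm p)
    exact ⟨k, by rw [← e.apply_symm_apply p, ← hconj.iterate_right k, hk]⟩
  obtain ⟨T, hT, hw⟩ := exists_isTree_weightOf_le_sum (fun p q => ptDist_comm p.1 q.1)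
    (fun p q => ptDist_nonneg p.1 q.1) f _ hroot
  refine ⟨T, hT, hw.trans (le_of_eq_of_le ?_ sum_ptDist_gridParent_le)⟩
  rw [← e.sum_comp]
  simp only [f, Function.comp_apply, Equiv.symm_apply_apply]
  rfl

lemma two_mul_gridRadiusSum_sub_one_le_pathLength {l : List (ℝ × ℝ)} (hl : l.Nodup)
    (hlP : l.toFinset = fordGrid n) : 2 * gridRadiusSum n - 1 ≤ pathLength l := by
  have hne : l ≠ [] := by
    rintro rfl
    simpa [← hlP] using (card_fordGrid (n := n)).symm
  have hsum : (l.map Prod.snd).sum = gridRadiusSum n := by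
    rw [← List.sum_toFinset _ hl, hlP, sum_snd_fordGrid]
  have hford (p : ℝ × ℝ) (hp : p ∈ l) : p ∈ fordPoints :=
    fordGrid_subset_fordPoints (by rw [Finset.mem_coe, ← hlP]; exact List.mem_toFinset.2 hp)
  simpa [hsum] using two_mul_sum_snd_sub_one_le_pathLength hl hne hford

lemma natCast_div_mem_image_gridRat {p q : ℕ} (hq : q ∣ n + 1) (hpq : p ≤ q) :
    (p / q : ℚ) ∈ Finset.univ.image (gridRat n) := by
  obtain ⟨m, hm⟩ := hq
  have hj : p * m < n + 2 := by nlinarith [Nat.mul_le_mul_right m hpq]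
  refine Finset.mem_image.2 ⟨⟨p * m, hj⟩, Finset.mem_univ _, ?_⟩
  have hm0 : (m : ℚ) ≠ 0 := by rintro h; simp_all
  rw [gridRat, show ((n : ℚ) + 1) = q * m by exact_mod_cast hm]
  push_cast
  field_simp

lemma sum_one_div_four_mul_le_gridRadiusSum {Q : Finset Nat.Primes}
    (hQ : ∀ q ∈ Q, (q : ℕ) ∣ n + 1) : ∑ q ∈ Q, 1 / (4 * q : ℝ) ≤ gridRadiusSum n := by
  let T (q : Nat.Primes) : Finset ℚ := (Finset.Ico 1 (q : ℕ)).image fun p : ℕ => (p / q : ℚ)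
  have hden (q : Nat.Primes) : ∀ x ∈ T q, x.den = q := by
    simp only [T, Finset.mem_image, Finset.mem_Ico]
    rintro _ ⟨p, hp, rfl⟩
    exact Rat.den_natCast_div_prime q.prop (by omega) hp.2
  have hdisj : (Q : Set Nat.Primes).PairwiseDisjoint T := fun q _ q' _ hne =>
    Finset.disjoint_left.2 fun x hx hx' =>
      hne (Subtype.ext ((hden q x hx).symm.trans (hden q' x hx')))
  have hsub : Q.biUnion T ⊆ Finset.univ.image (gridRat n) := by
    simp only [Finset.biUnion_subset, T, Finset.image_subset_iff, Finset.mem_Ico]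
    exact fun q hq p hp => natCast_div_mem_image_gridRat (hQ q hq) hp.2.le
  calc ∑ q ∈ Q, 1 / (4 * q : ℝ)
      ≤ ∑ q ∈ Q, ∑ x ∈ T q, fordRadius x := by
        gcongr with q
        have hq0 : (q : ℚ) ≠ 0 := by exact_mod_cast q.prop.ne_zero
        rw [Finset.sum_image fun p _ p' _ h => by exact_mod_cast (div_left_inj' hq0).1 h]
        exact one_div_four_mul_le_sum_fordRadius q.prop
    _ = ∑ x ∈ Q.biUnion T, fordRadius x := (Finset.sum_biUnion hdisj).symm
    _ ≤ ∑ x ∈ Finset.univ.image (gridRat n), fordRadius x :=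
        Finset.sum_le_sum_of_subset_of_nonneg hsub fun x _ _ => (fordRadius_pos x).le
    _ = gridRadiusSum n := Finset.sum_image fun j _ k _ h => gridRat_injective h

end FordGrid

lemma exists_le_gridRadiusSum (C : ℝ) : ∃ n, C ≤ gridRadiusSum n := by
  obtain ⟨Q, hQ⟩ : ∃ Q : Finset Nat.Primes, 4 * C < ∑ q ∈ Q, 1 / (q : ℝ) := by
    by_contra! h
    exact Nat.Primes.not_summable_one_div (summable_of_sum_le (fun _ => by positivity) h)
  have hprod : 0 < ∏ q ∈ Q, (q : ℕ) := Finset.prod_pos fun q _ => q.prop.pos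
  have hdvd (q : Nat.Primes) (hq : q ∈ Q) : (q : ℕ) ∣ ∏ q ∈ Q, (q : ℕ) - 1 + 1 := by
    rw [Nat.sub_add_cancel hprod]
    exact Finset.dvd_prod_of_mem _ hq
  refine ⟨∏ q ∈ Q, (q : ℕ) - 1, le_trans ?_ (sum_one_div_four_mul_le_gridRadiusSum hdvd)⟩
  have hsum : ∑ q ∈ Q, 1 / (4 * q : ℝ) = (∑ q ∈ Q, 1 / (q : ℝ)) / 4 := by
    rw [Finset.sum_div]; congr 1 with q; ring
  linarith


/-- For every `ε > 0` there is a finite set `P` of at least two points of `ℝ²` such that,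
with the Euclidean (L2) distance, every Hamiltonian path on `P` (an enumeration of `P` without
repetition) has length at least `(2 − ε)` times the weight of any minimum spanning tree
of `P`. -/
theorem stmt13 (ε : ℝ) (hε : 0 < ε) :
    ∃ P : Finset (ℝ × ℝ), 2 ≤ P.card ∧
      ∀ Tmin : SimpleGraph P, Tmin.IsTree →
        (∀ T'' : SimpleGraph P, T''.IsTree →
          weightOf Tmin (fun p q => ptDist p.1 q.1) ≤
            weightOf T'' (fun p q => ptDist p.1 q.1)) →
        ∀ l : List (ℝ × ℝ), l.Nodup → l.toFinset = P →
          (2 - ε) * weightOf Tmin (fun p q => ptDist p.1 q.1) ≤ pathLength l := by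
  obtain ⟨n, hn⟩ := exists_le_gridRadiusSum ((5 + ε) / ε)
  refine ⟨fordGrid n, by rw [card_fordGrid]; omega, fun Tmin _ hmin l hl hlP => ?_⟩
  obtain ⟨T, hT, hTw⟩ := exists_isTree_weightOf_fordGrid_le (n := n)
  have hW : weightOf Tmin (fun p q => ptDist p.1 q.1) ≤ 2 + gridRadiusSum n :=
    (hmin T hT).trans hTw
  have hW0 := weightOf_nonneg Tmin fun p q => ptDist_nonneg p.1 q.1
  have hpath := two_mul_gridRadiusSum_sub_one_le_pathLength hl hlP
  have hεS : 5 + ε ≤ ε * gridRadiusSum n := (div_le_iff₀' hε).1 hn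
  rcases le_total ε 2 with hε2 | hε2
  · nlinarith [mul_le_mul_of_nonneg_left hW (sub_nonneg.2 hε2)]
  · nlinarith [mul_nonpos_of_nonpos_of_nonneg (sub_nonpos.2 hε2) hW0]
end
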